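/- arXiv:1508.01448 — 7 statements merged into one kernel-verified Lean document; each statement's English description precedes it below -/
import Mathlib

section
/- Let U⊆E_{≤p−1}. Then the minimum spanning tree weight after removing U satisfies val(U) = (σ(E_{−1}∖U) − 1) + Σ_{i=0}^{p−1} 2^i · (σ(E_{≤i}∖U) − 1). -/
/-!
Since `2^j = 1 + ∑_{i<j} 2^i`, the weight of an edge set `T` is
`|T ∖ E_{-1}| + ∑_{i<p} 2^i |T ∖ E_{≤i}|` (`levelSum`). So `val(U)` and the right-hand side are
the same weighted sum over the levels, of `|T ∖ E_{≤i}|` and of `σ(E_{≤i} ∖ U) - 1` respectively,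
and it suffices to compare these level by level.

Lower bound: if `T ⊆ E ∖ U` is connected, then `T ∩ A ⊆ A ∖ U`, and adding the `|T ∖ A|` remaining
edges of `T` makes it connected; each edge merges at most two components, so
`σ(A ∖ U) - 1 ≤ |T ∖ A|` for every `A`.

Upper bound: Kruskal's algorithm, run level by level, extends a spanning forest of
`E_{≤i-1} ∖ U` to one of `E_{≤i} ∖ U` using `σ(E_{≤i-1} ∖ U) - σ(E_{≤i} ∖ U)` new edges. The
resulting spanning tree of `E ∖ U` meets all the lower bounds at once.
-/

namespace MSTInterdiction

/-- A finite undirected loopless multigraph on vertex type `V` with edge type `E`: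
each edge has two distinct endpoints (parallel edges allowed). -/
structure Multigraph (V : Type*) (E : Type*) where
  fst : E → V
  snd : E → V
  loopless : ∀ e, fst e ≠ snd e

variable {V E : Type*}

/-- Adjacency relation using only the edges in `U`. -/
def Multigraph.rel (G : Multigraph V E) (U : Set E) (x y : V) : Prop :=
  ∃ e ∈ U, (G.fst e = x ∧ G.snd e = y) ∨ (G.fst e = y ∧ G.snd e = x)

/-- The graph `(V, U)` is connected. -/
def Multigraph.Connects (G : Multigraph V E) (U : Set E) : Prop :=
  ∀ x y : V, Relation.EqvGen (G.rel U) x y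

/-- `σ(U)`: the number of connected components of `(V, U)`. -/
noncomputable def Multigraph.sigma (G : Multigraph V E) (U : Set E) : ℕ :=
  Nat.card (Quotient (Relation.EqvGen.setoid (G.rel U)))

/-- Total cost (or weight) of a set of edges. -/
noncomputable def setSum (c : E → ℕ) (U : Set E) : ℕ := ∑ᶠ e ∈ U, c e

/-- `val(U)`: the weight of a minimum spanning tree of `(V, E ∖ U)`, i.e. the minimum
of `∑_{e ∈ T} w e` over `T ⊆ E ∖ U` with `(V, T)` connected. -/
noncomputable def Multigraph.val (G : Multigraph V E) (w : E → ℕ) (U : Set E) : ℕ :=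
  sInf {n | ∃ T : Set E, T ⊆ Uᶜ ∧ G.Connects T ∧ setSum w T = n}

/-- `E_{≤ i}`: edges of weight `0` or of weight `2^ℓ` for some natural `ℓ ≤ i`.
In particular `Ele w (-1) = E_{-1}` is the set of edges of weight `0`. -/
def Ele (w : E → ℕ) (i : ℤ) : Set E :=
  {e | w e = 0 ∨ ∃ ℓ : ℕ, (ℓ : ℤ) ≤ i ∧ w e = 2 ^ ℓ}

/-- The connected component of vertex `v` in the graph `(V, S)`. -/
def Multigraph.component (G : Multigraph V E) (S : Set E) (v : V) : Set V :=
  {u | Relation.EqvGen (G.rel S) v u}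

/-- The partition of `V` into the connected components of `(V, S)`. -/
def Multigraph.parts (G : Multigraph V E) (S : Set E) : Set (Set V) :=
  {A | ∃ v : V, A = G.component S v}

/-- Edge `e` has exactly one endpoint in `A`. -/
def Multigraph.oneEnd (G : Multigraph V E) (A : Set V) (e : E) : Prop :=
  (G.fst e ∈ A ∧ G.snd e ∉ A) ∨ (G.fst e ∉ A ∧ G.snd e ∈ A)

/-- Edge `e` has both endpoints in `A`. -/
def Multigraph.twoEnds (G : Multigraph V E) (A : Set V) (e : E) : Prop :=
  G.fst e ∈ A ∧ G.snd e ∈ A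

open Relation

lemma card_eq_card_add_one_of_bijOn_compl_singleton {α β : Type*} [Finite α] {f : α → β} {a : α}
    (hf : Set.BijOn f {a}ᶜ Set.univ) : Nat.card α = Nat.card β + 1 := by
  rw [← Set.ncard_univ β, ← hf.ncard_eq, ← Set.ncard_add_ncard_compl {a}, Set.ncard_singleton,
    add_comm]

lemma sdiff_sdiff_eq_of_subset_compl {T A U : Set E} (h : T ⊆ Uᶜ) : T \ (A \ U) = T \ A := by
  rw [Set.sdiff_sdiff_right, (Set.subset_compl_iff_disjoint_right.1 h).inter_eq, Set.union_empty]

namespace Multigraph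

variable (G : Multigraph V E) {S S' : Set E}

lemma rel_mono (h : S ⊆ S') : G.rel S ≤ G.rel S' :=
  fun _ _ ⟨e, he, hends⟩ => ⟨e, h he, hends⟩

lemma eqvGen_mono (h : S ⊆ S') : EqvGen (G.rel S) ≤ EqvGen (G.rel S') :=
  EqvGen.mono (G.rel_mono h)

lemma eqvGen_of_mem {e : E} (he : e ∈ S) : EqvGen (G.rel S) (G.fst e) (G.snd e) :=
  .rel _ _ ⟨e, he, .inl ⟨rfl, rfl⟩⟩

lemma eqvGen_le_of_forall_mem (h : ∀ e ∈ S', EqvGen (G.rel S) (G.fst e) (G.snd e)) :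
    EqvGen (G.rel S') ≤ EqvGen (G.rel S) := by
  rw [← (EqvGen.is_equivalence (G.rel S)).eqvGen_eq]
  refine EqvGen.mono fun x y ⟨e, he, hends⟩ => ?_
  rcases hends with ⟨rfl, rfl⟩ | ⟨rfl, rfl⟩
  exacts [h e he, .symm _ _ (h e he)]

lemma eqvGen_insert {e : E} {x y : V} (h : EqvGen (G.rel (insert e S)) x y) :
    EqvGen (G.rel S) x y ∨
      ((EqvGen (G.rel S) x (G.fst e) ∨ EqvGen (G.rel S) x (G.snd e)) ∧
        (EqvGen (G.rel S) y (G.fst e) ∨ EqvGen (G.rel S) y (G.snd e))) := by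
  induction h with
  | rel a b hab =>
    obtain ⟨e', he' | he', hends⟩ := hab
    · subst he'
      rcases hends with ⟨rfl, rfl⟩ | ⟨rfl, rfl⟩
      · exact .inr ⟨.inl (.refl _), .inr (.refl _)⟩
      · exact .inr ⟨.inr (.refl _), .inl (.refl _)⟩
    · exact .inl (.rel _ _ ⟨e', he', hends⟩)
  | refl a => exact .inl (.refl _)
  | symm a b _ ih => exact ih.imp (.symm _ _) And.symm
  | trans a b c _ _ ihab ihbc =>
    rcases ihab with hab | ⟨ha, hb⟩ <;> rcases ihbc with hbc | ⟨hb', hc⟩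
    · exact .inl (.trans _ _ _ hab hbc)
    · exact .inr ⟨hb'.imp (.trans _ _ _ hab) (.trans _ _ _ hab), hc⟩
    · exact .inr ⟨ha, hb.imp (.trans _ _ _ (.symm _ _ hbc)) (.trans _ _ _ (.symm _ _ hbc))⟩
    · exact .inr ⟨ha, hc⟩

lemma sigma_eq_one [Nonempty V] (h : G.Connects S) : G.sigma S = 1 :=
  Nat.card_eq_one_iff_unique.2
    ⟨⟨fun c d => Quotient.inductionOn₂ c d fun x y => Quotient.sound (h x y)⟩,
      ⟨Quotient.mk _ (Classical.arbitrary V)⟩⟩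

variable [Finite V]

lemma sigma_le_of_eqvGen_le (h : EqvGen (G.rel S) ≤ EqvGen (G.rel S')) :
    G.sigma S' ≤ G.sigma S :=
  Nat.card_le_card_of_surjective (Quotient.map' id h)
    fun q => q.inductionOn fun x => ⟨Quotient.mk _ x, rfl⟩

lemma sigma_anti (h : S ⊆ S') : G.sigma S' ≤ G.sigma S :=
  G.sigma_le_of_eqvGen_le (G.eqvGen_mono h)

lemma sigma_insert_of_not_eqvGen {e : E} (h : ¬ EqvGen (G.rel S) (G.fst e) (G.snd e)) :
    G.sigma S = G.sigma (insert e S) + 1 := by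
  refine card_eq_card_add_one_of_bijOn_compl_singleton
    (f := Quotient.map' id (G.eqvGen_mono (S.subset_insert e))) (a := Quotient.mk _ (G.snd e))
    ⟨Set.mapsTo_univ _ _, ?_, ?_⟩
  · rintro ⟨x⟩ hx ⟨y⟩ hy hxy
    replace hx : ¬ EqvGen (G.rel S) x (G.snd e) := fun h' => hx (Quotient.sound h')
    replace hy : ¬ EqvGen (G.rel S) y (G.snd e) := fun h' => hy (Quotient.sound h')
    apply Quotient.sound
    rcases G.eqvGen_insert (Quotient.exact hxy) with hxy | ⟨hx' | hx', hy' | hy'⟩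
    · exact hxy
    · exact .trans _ _ _ hx' (.symm _ _ hy')
    all_goals contradiction
  · rintro ⟨x⟩ -
    by_cases hx : EqvGen (G.rel S) x (G.snd e)
    · refine ⟨Quotient.mk _ (G.fst e), fun h' => h (Quotient.exact h'), Quotient.sound ?_⟩
      exact .trans _ _ _ (G.eqvGen_of_mem (S.mem_insert e))
        (.symm _ _ (G.eqvGen_mono (S.subset_insert e) _ _ hx))
    · exact ⟨Quotient.mk _ x, fun h' => hx (Quotient.exact h'), rfl⟩

lemma sigma_insert_of_eqvGen {e : E} (h : EqvGen (G.rel S) (G.fst e) (G.snd e)) :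
    G.sigma (insert e S) = G.sigma S := by
  refine (G.sigma_anti (S.subset_insert e)).antisymm (G.sigma_le_of_eqvGen_le ?_)
  refine G.eqvGen_le_of_forall_mem fun e' he' => ?_
  rcases he' with rfl | he'
  exacts [h, G.eqvGen_of_mem he']

lemma sigma_le_sigma_insert_add_one (e : E) : G.sigma S ≤ G.sigma (insert e S) + 1 := by
  by_cases h : EqvGen (G.rel S) (G.fst e) (G.snd e)
  · rw [G.sigma_insert_of_eqvGen h]; omega
  · rw [G.sigma_insert_of_not_eqvGen h]

lemma sigma_le_sigma_union_add_ncard {B : Set E} (hB : B.Finite) :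
    G.sigma S ≤ G.sigma (S ∪ B) + B.ncard := by
  induction B, hB using Set.Finite.induction_on with
  | empty => simp
  | @insert e B he hB ih =>
    have := G.sigma_le_sigma_insert_add_one (S := S ∪ B) e
    rw [Set.union_insert, Set.ncard_insert_of_notMem he hB]
    omega

lemma sigma_le_ncard_sdiff_add_one [Nonempty V] [Finite E] {T : Set E} (hT : G.Connects T)
    (A : Set E) : G.sigma A ≤ (T \ A).ncard + 1 :=
  calc G.sigma A ≤ G.sigma (T ∩ A) := G.sigma_anti Set.inter_subset_right
    _ ≤ G.sigma (T ∩ A ∪ T \ A) + (T \ A).ncard := G.sigma_le_sigma_union_add_ncard (Set.toFinite _)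
    _ = (T \ A).ncard + 1 := by rw [Set.inter_union_sdiff, G.sigma_eq_one hT, add_comm]

lemma exists_extension_ncard_add_sigma_le (h : S ⊆ S') :
    ∃ F ⊆ S', EqvGen (G.rel S') ≤ EqvGen (G.rel (S ∪ F)) ∧ F.ncard + G.sigma S' ≤ G.sigma S := by
  induction hn : G.sigma S using Nat.strong_induction_on generalizing S with
  | _ n ih =>
  by_cases hspan : ∀ e ∈ S', EqvGen (G.rel S) (G.fst e) (G.snd e)
  · refine ⟨∅, Set.empty_subset _, by simpa using G.eqvGen_le_of_forall_mem hspan, ?_⟩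
    simpa [← hn] using G.sigma_anti h
  · push Not at hspan
    obtain ⟨e, heS', he⟩ := hspan
    have hdrop := G.sigma_insert_of_not_eqvGen he
    obtain ⟨F, hFS', hspanF, hcard⟩ := ih _ (by omega) (Set.insert_subset heS' h) rfl
    refine ⟨insert e F, Set.insert_subset heS' hFS', ?_, ?_⟩
    · rwa [Set.union_insert, ← Set.insert_union]
    · have := Set.ncard_insert_le e F
      omega

lemma exists_spanning_ncard_sdiff_add_sigma_le [Finite E] {c : ℕ → Set E} (hc : Monotone c)
    (n : ℕ) : ∃ T ⊆ c n, EqvGen (G.rel (c n)) ≤ EqvGen (G.rel T) ∧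
      ∀ j ≤ n, (T \ c j).ncard + G.sigma (c n) ≤ G.sigma (c j) := by
  induction n with
  | zero => exact ⟨c 0, subset_rfl, le_rfl, fun j hj => by simp [Nat.le_zero.1 hj]⟩
  | succ n ih =>
    obtain ⟨T, hTc, hTspan, hT⟩ := ih
    have hTc' : T ⊆ c (n + 1) := hTc.trans (hc n.le_succ)
    obtain ⟨F, hFc, hFspan, hF⟩ := G.exists_extension_ncard_add_sigma_le hTc'
    have hσT : G.sigma T ≤ G.sigma (c n) := G.sigma_le_of_eqvGen_le hTspan
    refine ⟨T ∪ F, Set.union_subset hTc' hFc, hFspan, fun j hj => ?_⟩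
    rcases Nat.of_le_succ hj with hj | rfl
    · have hsplit : ((T ∪ F) \ c j).ncard ≤ (T \ c j).ncard + F.ncard := by
        rw [Set.union_sdiff_distrib]
        exact (Set.ncard_union_le _ _).trans
          (Nat.add_le_add_left (Set.ncard_le_ncard Set.sdiff_subset (Set.toFinite F)) _)
      have := hT j hj
      omega
    · simp [Set.sdiff_eq_empty.2 (Set.union_subset hTc' hFc)]

end Multigraph

lemma Ele_mono (w : E → ℕ) : Monotone (Ele w) :=
  fun _ _ hij _ he => he.imp_right fun ⟨ℓ, hℓ, hwe⟩ => ⟨ℓ, hℓ.trans hij, hwe⟩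

lemma mem_Ele_iff_of_eq_pow {w : E → ℕ} {e : E} {j : ℕ} (hj : w e = 2 ^ j) {i : ℤ} :
    e ∈ Ele w i ↔ (j : ℤ) ≤ i := by
  refine ⟨?_, fun h => .inr ⟨j, h, hj⟩⟩
  rintro (h0 | ⟨ℓ, hℓ, hℓj⟩)
  · simp [hj] at h0
  · rwa [Nat.pow_right_injective le_rfl (hj.symm.trans hℓj)]

lemma Ele_eq_univ {w : E → ℕ} {p : ℕ} (hw : ∀ e, w e = 0 ∨ ∃ i ≤ p, w e = 2 ^ i) :
    Ele w p = Set.univ :=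
  Set.eq_univ_of_forall fun e => (hw e).imp_right fun ⟨i, hi, hwe⟩ => ⟨i, by exact_mod_cast hi, hwe⟩

def levelSum (p : ℕ) (f : ℤ → ℤ) : ℤ :=
  f (-1) + ∑ i ∈ Finset.range p, 2 ^ i * f i

lemma levelSum_mono {p : ℕ} {f g : ℤ → ℤ} (h : ∀ i : ℤ, -1 ≤ i → i < p → f i ≤ g i) :
    levelSum p f ≤ levelSum p g := by
  unfold levelSum
  gcongr with i hi
  · exact h _ le_rfl (by omega)
  · exact h _ (by omega) (by simpa using hi)

lemma levelSum_sum {ι : Type*} (p : ℕ) (s : Finset ι) (f : ι → ℤ → ℤ) :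
    levelSum p (fun i => ∑ x ∈ s, f x i) = ∑ x ∈ s, levelSum p (f x) := by
  simp only [levelSum, Finset.sum_add_distrib, Finset.mul_sum]
  rw [Finset.sum_comm]

lemma levelSum_ite_le_eq_two_pow {p j : ℕ} (hj : j ≤ p) :
    levelSum p (fun i => if (j : ℤ) ≤ i then 0 else 1) = 2 ^ j := by
  have hgeom : ∑ i ∈ Finset.range j, (2 : ℤ) ^ i = 2 ^ j - 1 := by
    simpa using geom_sum_mul (2 : ℤ) j
  have hsum : ∑ i ∈ Finset.range p, (2 : ℤ) ^ i * (if (j : ℤ) ≤ (i : ℤ) then 0 else 1)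
      = ∑ i ∈ Finset.range j, (2 : ℤ) ^ i := by
    have hlow : ∀ i ∈ Finset.range j, (2 : ℤ) ^ i * (if (j : ℤ) ≤ i then 0 else 1) = 2 ^ i := by
      intro i hi
      rw [if_neg (by simp at hi; omega), mul_one]
    have hhigh : ∀ i ∈ Finset.Ico j p, (2 : ℤ) ^ i * (if (j : ℤ) ≤ i then 0 else 1) = 0 := by
      intro i hi
      rw [if_pos (by simp at hi; omega), mul_zero]
    rw [← Finset.sum_range_add_sum_Ico _ hj, Finset.sum_congr rfl hlow, Finset.sum_eq_zero hhigh,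
      add_zero]
  rw [levelSum, hsum, hgeom, if_neg (by omega)]
  ring

open Classical in
lemma weight_eq_levelSum {w : E → ℕ} {p : ℕ} (hw : ∀ e, w e = 0 ∨ ∃ i ≤ p, w e = 2 ^ i)
    (e : E) : (w e : ℤ) = levelSum p (fun i => if e ∈ Ele w i then 0 else 1) := by
  rcases hw e with h0 | ⟨j, hjp, hj⟩
  · have hmem : ∀ i, e ∈ Ele w i := fun _ => .inl h0
    simp [levelSum, hmem, h0]
  · simp_rw [mem_Ele_iff_of_eq_pow hj, levelSum_ite_le_eq_two_pow hjp, hj]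
    norm_num

lemma setSum_eq_levelSum [Finite E] {w : E → ℕ} {p : ℕ}
    (hw : ∀ e, w e = 0 ∨ ∃ i ≤ p, w e = 2 ^ i) (T : Set E) :
    (setSum w T : ℤ) = levelSum p (fun i => ((T \ Ele w i).ncard : ℤ)) := by
  classical
  have hT := Set.toFinite T
  have hncard (A : Set E) :
      ((T \ A).ncard : ℤ) = ∑ e ∈ hT.toFinset, if e ∈ A then 0 else 1 := by
    have hfilter : ((hT.toFinset.filter (· ∉ A) : Finset E) : Set E) = T \ A := by
      ext; simp
    rw [← hfilter, Set.ncard_coe_finset]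
    simp [Finset.sum_ite]
  rw [setSum, finsum_mem_eq_finite_toFinset_sum _ hT, Nat.cast_sum,
    Finset.sum_congr rfl fun e _ => weight_eq_levelSum hw e, ← levelSum_sum]
  simp_rw [hncard]

namespace Multigraph

variable (G : Multigraph V E) {w : E → ℕ} {U T : Set E}

lemma val_le_setSum (hTU : T ⊆ Uᶜ) (hT : G.Connects T) : G.val w U ≤ setSum w T :=
  Nat.sInf_le ⟨T, hTU, hT, rfl⟩

lemma exists_setSum_eq_val (hTU : T ⊆ Uᶜ) (hT : G.Connects T) :
    ∃ T₀ ⊆ Uᶜ, G.Connects T₀ ∧ setSum w T₀ = G.val w U :=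
  Nat.sInf_mem (s := {n | ∃ T, T ⊆ Uᶜ ∧ G.Connects T ∧ setSum w T = n}) ⟨_, T, hTU, hT, rfl⟩

lemma exists_connected_ncard_sdiff_Ele_add_one_le [Finite V] [Nonempty V] [Finite E] {p : ℕ}
    (hw : ∀ e, w e = 0 ∨ ∃ i ≤ p, w e = 2 ^ i) (hU : G.Connects Uᶜ) :
    ∃ T ⊆ Uᶜ, G.Connects T ∧
      ∀ i : ℤ, -1 ≤ i → i ≤ p → (T \ Ele w i).ncard + 1 ≤ G.sigma (Ele w i \ U) := by
  obtain ⟨T, hTU, hTspan, hTcount⟩ := G.exists_spanning_ncard_sdiff_add_sigma_le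
    (c := fun j : ℕ => Ele w ((j : ℤ) - 1) \ U)
    (fun i j hij => Set.sdiff_subset_sdiff_left (Ele_mono w (by omega))) (p + 1)
  have hlast : Ele w (((p + 1 : ℕ) : ℤ) - 1) \ U = Uᶜ := by
    rw [Nat.cast_succ, add_sub_cancel_right, Ele_eq_univ hw, Set.compl_eq_univ_sdiff]
  rw [hlast] at hTU hTspan hTcount
  refine ⟨T, hTU, fun x y => hTspan _ _ (hU x y), fun i hi hip => ?_⟩
  have := hTcount (i + 1).toNat (by omega)
  rwa [Int.toNat_of_nonneg (by omega), add_sub_cancel_right, sdiff_sdiff_eq_of_subset_compl hTU,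
    G.sigma_eq_one hU] at this

end Multigraph

theorem mst_weight_level_formula_general
    [Fintype V] [Fintype E] [Nonempty V]
    (G : Multigraph V E) (w : E → ℕ) (p : ℕ)
    (hw : ∀ e, w e = 0 ∨ ∃ i ≤ p, w e = 2 ^ i)
    (hEp : G.Connects {e | w e = 2 ^ p})
    (U : Set E) (hU : U ⊆ Ele w ((p : ℤ) - 1)) :
    (G.val w U : ℤ) =
      ((G.sigma (Ele w (-1) \ U) : ℤ) - 1)
        + ∑ i ∈ Finset.range p, (2 : ℤ) ^ i * ((G.sigma (Ele w (i : ℤ) \ U) : ℤ) - 1) := by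
  have htop : {e | w e = 2 ^ p} ⊆ Uᶜ := fun e he heU => by
    have := (mem_Ele_iff_of_eq_pow he).1 (hU heU)
    omega
  have hUc : G.Connects Uᶜ := fun x y => G.eqvGen_mono htop _ _ (hEp x y)
  obtain ⟨T, hTU, hT, hTcount⟩ := G.exists_connected_ncard_sdiff_Ele_add_one_le hw hUc
  obtain ⟨T₀, hT₀U, hT₀, hT₀val⟩ := G.exists_setSum_eq_val (w := w) hTU hT
  change (G.val w U : ℤ) = levelSum p fun i => (G.sigma (Ele w i \ U) : ℤ) - 1
  apply le_antisymm
  · calc (G.val w U : ℤ) ≤ setSum w T := by exact_mod_cast G.val_le_setSum hTU hT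
      _ = levelSum p fun i => ((T \ Ele w i).ncard : ℤ) := setSum_eq_levelSum hw T
      _ ≤ _ := levelSum_mono fun i hi hip => by
        have := hTcount i hi hip.le
        omega
  · calc _ ≤ levelSum p fun i => ((T₀ \ Ele w i).ncard : ℤ) := levelSum_mono fun i _ _ => by
          have := G.sigma_le_ncard_sdiff_add_one hT₀ (Ele w i \ U)
          rw [sdiff_sdiff_eq_of_subset_compl hT₀U] at this
          omega
      _ = G.val w U := by rw [← setSum_eq_levelSum hw T₀, hT₀val]

/-- For `U ⊆ E_{≤ p-1}`, the MST weight after removing `U` satisfies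
`val(U) = (σ(E_{−1}∖U) − 1) + Σ_{i=0}^{p−1} 2^i (σ(E_{≤i}∖U) − 1)`. -/
theorem mst_weight_level_formula
    [Fintype V] [Fintype E] [Nonempty V]
    (G : Multigraph V E) (w : E → ℕ) (p : ℕ) (hp : 1 ≤ p)
    (hw : ∀ e, w e = 0 ∨ ∃ i ≤ p, w e = 2 ^ i)
    (hEp : G.Connects {e | w e = 2 ^ p})
    (U : Set E) (hU : U ⊆ Ele w ((p : ℤ) - 1)) :
    (G.val w U : ℤ) =
      ((G.sigma (Ele w (-1) \ U) : ℤ) - 1)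
        + ∑ i ∈ Finset.range p, (2 : ℤ) ^ i * ((G.sigma (Ele w (i : ℤ) \ U) : ℤ) - 1) :=
  mst_weight_level_formula_general G w p hw hEp U hU

end MSTInterdiction
end

section
/- Define rounded weights w′ by w′(e)=0 if w(e)=0 and w′(e)= the largest power of two not exceeding w(e) otherwise, and let val′ denote minimum spanning tree weights with respect to w′. Then (a) for every U⊆E with (V,E∖U) connected, val′(U) ≤ val(U) ≤ 2·val′(U); and consequently (b) for any real α≥1, if R⊆E satisfies c(R)≤B and α·val′(R) ≥ val′(R′) for every interdiction set R′, then 2α·val(R) ≥ val(R′) for every interdiction set R′. -/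
namespace MSTInterdiction

variable {V E : Type*}

/-- The rounded weight `w'`: `w'(e) = 0` if `w(e) = 0`, and otherwise `w'(e)` is the
largest power of two not exceeding `w(e)`. -/
def round2 (w : E → ℕ) : E → ℕ :=
  fun e => if w e = 0 then 0 else 2 ^ Nat.log 2 (w e)

lemma round2_le (w : E → ℕ) (e : E) : round2 w e ≤ w e := by
  unfold round2
  by_cases h : w e = 0
  · simp [h]
  · simp only [h, if_false]
    exact Nat.pow_log_le_self 2 h

lemma le_two_round2 (w : E → ℕ) (e : E) : w e ≤ 2 * round2 w e := by
  unfold round2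
  by_cases h : w e = 0
  · simp [h]
  · simp only [h, if_false]
    have := Nat.lt_pow_succ_log_self (by norm_num : 1 < 2) (w e)
    rw [pow_succ, mul_comm] at this
    omega

lemma setSum_eq [Fintype E] (f : E → ℕ) (T : Set E) :
    setSum f T = ∑ e ∈ (Set.toFinite T).toFinset, f e := by
  rw [setSum, finsum_mem_eq_finite_toFinset_sum]

lemma setSum_mono [Fintype E] {f g : E → ℕ} (h : ∀ e, f e ≤ g e) (T : Set E) :
    setSum f T ≤ setSum g T := by
  rw [setSum_eq, setSum_eq]
  exact Finset.sum_le_sum fun e _ => h e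

lemma setSum_le_two [Fintype E] (w : E → ℕ) (T : Set E) :
    setSum w T ≤ 2 * setSum (round2 w) T := by
  rw [setSum_eq, setSum_eq, Finset.mul_sum]
  exact Finset.sum_le_sum fun e _ => le_two_round2 w e

lemma val_le (G : Multigraph V E) (w : E → ℕ) (U T : Set E)
    (hT : T ⊆ Uᶜ) (hc : G.Connects T) : G.val w U ≤ setSum w T :=
  Nat.sInf_le ⟨T, hT, hc, rfl⟩

lemma val_spec (G : Multigraph V E) (w : E → ℕ) (U : Set E) (h : G.Connects Uᶜ) :
    ∃ T : Set E, T ⊆ Uᶜ ∧ G.Connects T ∧ setSum w T = G.val w U :=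
  Nat.sInf_mem (⟨setSum w Uᶜ, Uᶜ, le_refl _, h, rfl⟩ :
    {n | ∃ T : Set E, T ⊆ Uᶜ ∧ G.Connects T ∧ setSum w T = n}.Nonempty)

/-- (a) For every `U ⊆ E` with `(V, E∖U)` connected,
`val'(U) ≤ val(U) ≤ 2·val'(U)`, where `val'` is the MST weight for the rounded weights;
(b) consequently, for any real `α ≥ 1`, any interdiction set `R` that is an
`α`-approximation for the rounded weights is a `2α`-approximation for the original
weights. -/
theorem rounding_weights_approx
    [Fintype V] [Fintype E]
    (G : Multigraph V E) (w : E → ℕ) (c : E → ℕ) (hc : ∀ e, 0 < c e)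
    (B : ℕ) (hB : 0 < B)
    (hconn : ∀ R : Set E, setSum c R ≤ B → G.Connects Rᶜ) :
    (∀ U : Set E, G.Connects Uᶜ →
        G.val (round2 w) U ≤ G.val w U ∧ G.val w U ≤ 2 * G.val (round2 w) U) ∧
    (∀ α : ℝ, 1 ≤ α → ∀ R : Set E, setSum c R ≤ B →
        (∀ R' : Set E, setSum c R' ≤ B →
          (G.val (round2 w) R' : ℝ) ≤ α * (G.val (round2 w) R : ℝ)) →
        ∀ R' : Set E, setSum c R' ≤ B →
          (G.val w R' : ℝ) ≤ 2 * α * (G.val w R : ℝ)) := by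
  have key : ∀ U : Set E, G.Connects Uᶜ →
      G.val (round2 w) U ≤ G.val w U ∧ G.val w U ≤ 2 * G.val (round2 w) U := by
    intro U hU
    obtain ⟨T, hT, hTc, hTv⟩ := val_spec G w U hU
    obtain ⟨T', hT', hT'c, hT'v⟩ := val_spec G (round2 w) U hU
    constructor
    · calc G.val (round2 w) U ≤ setSum (round2 w) T := val_le G _ U T hT hTc
        _ ≤ setSum w T := setSum_mono (round2_le w) T
        _ = G.val w U := hTv
    · calc G.val w U ≤ setSum w T' := val_le G _ U T' hT' hT'c
        _ ≤ 2 * setSum (round2 w) T' := setSum_le_two w T'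
        _ = 2 * G.val (round2 w) U := by rw [hT'v]
  refine ⟨key, ?_⟩
  intro α hα R hR happrox R' hR'
  have h1 := key R (hconn R hR)
  have h2 := key R' (hconn R' hR')
  have hα0 : (0:ℝ) ≤ α := le_trans zero_le_one hα
  have c1 : (G.val w R' : ℝ) ≤ 2 * (G.val (round2 w) R' : ℝ) := by
    exact_mod_cast h2.2
  have c2 : (G.val (round2 w) R : ℝ) ≤ (G.val w R : ℝ) := by
    exact_mod_cast h1.1
  calc (G.val w R' : ℝ) ≤ 2 * (G.val (round2 w) R' : ℝ) := c1
    _ ≤ 2 * (α * (G.val (round2 w) R : ℝ)) := by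
        have := happrox R' hR'; nlinarith [this]
    _ = 2 * α * (G.val (round2 w) R : ℝ) := by ring
    _ ≤ 2 * α * (G.val w R : ℝ) := by nlinarith

end MSTInterdiction
end

section
/- Assume c(δ(S)) > B for every nonempty proper subset S⊊V, where δ(S) is the set of edges with exactly one endpoint in S (so (V,E∖R) is connected for every interdiction set R). Then there exists an optimal interdiction set avoiding the heaviest edges: a set R*⊆E with c(R*)≤B, R*∩E_p=∅, and val(R*) ≥ val(R) for every interdiction set R. -/
namespace MSTInterdiction

variable {V E : Type*}

open Relation

lemma eqvGen_mono' {r s : V → V → Prop} (h : ∀ x y, r x y → EqvGen s x y) :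
    ∀ x y, EqvGen r x y → EqvGen s x y := by
  intro x y hxy
  induction hxy with
  | rel a b hab => exact h a b hab
  | refl a => exact .refl a
  | symm a b _ ih => exact ih.symm
  | trans a b c _ _ ih1 ih2 => exact ih1.trans _ _ _ ih2

lemma setSum_eq_finsetSum [Fintype E] (c : E → ℕ) (U : Set E) :
    setSum c U = ∑ e ∈ (Set.toFinite U).toFinset, c e := by
  rw [setSum, ← finsum_mem_coe_finset, Set.Finite.coe_toFinset]

lemma setSum_mono_s4 [Fintype E] (c : E → ℕ) {U U' : Set E} (h : U ⊆ U') :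
    setSum c U ≤ setSum c U' := by
  classical
  rw [setSum_eq_finsetSum, setSum_eq_finsetSum]
  exact Finset.sum_le_sum_of_subset (Set.Finite.toFinset_subset_toFinset.2 h)

lemma setSum_diff_singleton_add [Fintype E] (c : E → ℕ) {T : Set E} {e : E} (he : e ∈ T) :
    setSum c (T \ {e}) + c e = setSum c T := by
  classical
  rw [setSum_eq_finsetSum, setSum_eq_finsetSum]
  rw [show (Set.toFinite (T \ {e})).toFinset = (Set.toFinite T).toFinset.erase e by
    ext x
    simp only [Set.Finite.mem_toFinset, Finset.mem_erase, Set.mem_diff, Set.mem_singleton_iff]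
    tauto]
  exact Finset.sum_erase_add _ _ ((Set.Finite.mem_toFinset _).2 he)

lemma setSum_insert [Fintype E] (c : E → ℕ) {T : Set E} {f : E} (hf : f ∉ T) :
    setSum c (insert f T) = c f + setSum c T := by
  classical
  rw [setSum_eq_finsetSum, setSum_eq_finsetSum]
  rw [show (Set.toFinite (insert f T)).toFinset = insert f (Set.toFinite T).toFinset by
    ext x
    simp only [Set.Finite.mem_toFinset, Finset.mem_insert, Set.mem_insert_iff]]
  exact Finset.sum_insert (fun hx => hf ((Set.Finite.mem_toFinset _).1 hx))

/-- Splitting lemma: a path in `T` either avoids `e` or decomposes. -/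
lemma split_lemma (G : Multigraph V E) (T : Set E) (e : E) {x y : V}
    (h : EqvGen (G.rel T) x y) :
    EqvGen (G.rel (T \ {e})) x y ∨
    (EqvGen (G.rel (T \ {e})) x (G.fst e) ∧ EqvGen (G.rel (T \ {e})) y (G.snd e)) ∨
    (EqvGen (G.rel (T \ {e})) x (G.snd e) ∧ EqvGen (G.rel (T \ {e})) y (G.fst e)) := by
  induction h with
  | rel a b hab =>
      obtain ⟨e', he'T, hends⟩ := hab
      by_cases he : e' = e
      · subst he
        rcases hends with ⟨h1, h2⟩ | ⟨h1, h2⟩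
        · subst h1; subst h2; exact Or.inr (Or.inl ⟨.refl _, .refl _⟩)
        · subst h1; subst h2; exact Or.inr (Or.inr ⟨.refl _, .refl _⟩)
      · exact Or.inl (EqvGen.rel _ _ ⟨e', ⟨he'T, he⟩, hends⟩)
  | refl a => exact Or.inl (.refl a)
  | symm a b _ ih =>
      rcases ih with h1 | ⟨h1, h2⟩ | ⟨h1, h2⟩
      · exact Or.inl h1.symm
      · exact Or.inr (Or.inr ⟨h2, h1⟩)
      · exact Or.inr (Or.inl ⟨h2, h1⟩)
  | trans a b c _ _ ih1 ih2 =>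
      have sy : ∀ {u v : V}, EqvGen (G.rel (T \ {e})) u v → EqvGen (G.rel (T \ {e})) v u :=
        fun h => EqvGen.symm _ _ h
      have tr : ∀ {u v z : V}, EqvGen (G.rel (T \ {e})) u v →
          EqvGen (G.rel (T \ {e})) v z → EqvGen (G.rel (T \ {e})) u z :=
        fun h h' => EqvGen.trans _ _ _ h h'
      rcases ih1 with h1 | ⟨h1, h2⟩ | ⟨h1, h2⟩ <;>
        rcases ih2 with h3 | ⟨h3, h4⟩ | ⟨h3, h4⟩
      · exact Or.inl (tr h1 h3)
      · exact Or.inr (Or.inl ⟨tr h1 h3, h4⟩)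
      · exact Or.inr (Or.inr ⟨tr h1 h3, h4⟩)
      · exact Or.inr (Or.inl ⟨h1, tr (sy h3) h2⟩)
      · exact Or.inl (tr h1 (tr (sy h3) (tr h2 (sy h4))))
      · exact Or.inl (tr h1 (sy h4))
      · exact Or.inr (Or.inr ⟨h1, tr (sy h3) h2⟩)
      · exact Or.inl (tr h1 (sy h4))
      · exact Or.inl (tr h1 (tr (sy h3) (tr h2 (sy h4))))

open Relation

lemma component_closed (G : Multigraph V E) {U : Set E} {v x y : V}
    (hx : x ∈ G.component U v) (hxy : G.rel U x y) : y ∈ G.component U v :=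
  EqvGen.trans _ _ _ hx (EqvGen.rel _ _ hxy)

lemma cut_subset_compl (G : Multigraph V E) (U : Set E) (v : V) :
    {e | G.oneEnd (G.component U v) e} ⊆ Uᶜ := by
  intro e he heU
  rcases he with ⟨h1, h2⟩ | ⟨h1, h2⟩
  · exact h2 (component_closed G h1 ⟨e, heU, Or.inl ⟨rfl, rfl⟩⟩)
  · exact h1 (component_closed G h2 ⟨e, heU, Or.inr ⟨rfl, rfl⟩⟩)

lemma connects_compl [Fintype E] (G : Multigraph V E) (c : E → ℕ) (B : ℕ)
    (hcut : ∀ S : Set V, S.Nonempty → S ≠ Set.univ → B < setSum c {e | G.oneEnd S e})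
    {U : Set E} (hU : setSum c U ≤ B) : G.Connects Uᶜ := by
  intro x y
  by_contra h
  have hSne : (G.component Uᶜ x).Nonempty := ⟨x, EqvGen.refl x⟩
  have hSproper : G.component Uᶜ x ≠ Set.univ := by
    intro hS
    have : y ∈ G.component Uᶜ x := hS ▸ Set.mem_univ y
    exact h this
  have h1 := hcut _ hSne hSproper
  have h2 : {e | G.oneEnd (G.component Uᶜ x) e} ⊆ U := by
    have := cut_subset_compl G Uᶜ x
    rwa [compl_compl] at this
  exact absurd (le_trans (setSum_mono_s4 c h2) hU) (not_le.2 h1)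

lemma connects_swap (G : Multigraph V E) {T T₂ : Set E} {e : E}
    (hsub : T \ {e} ⊆ T₂) (hab : EqvGen (G.rel T₂) (G.fst e) (G.snd e))
    (hconn : G.Connects T) : G.Connects T₂ := by
  intro x y
  refine eqvGen_mono' ?_ x y (hconn x y)
  rintro u v ⟨e', he'T, hends⟩
  by_cases he : e' = e
  · subst he
    rcases hends with ⟨h1, h2⟩ | ⟨h1, h2⟩
    · subst h1; subst h2; exact hab
    · subst h1; subst h2; exact EqvGen.symm _ _ hab
  · exact EqvGen.rel _ _ ⟨e', hsub ⟨he'T, he⟩, hends⟩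

lemma swap_step [Fintype E] (G : Multigraph V E) (w c : E → ℕ) (B p : ℕ)
    (hw : ∀ e, w e = 0 ∨ ∃ i ≤ p, w e = 2 ^ i)
    (hcut : ∀ S : Set V, S.Nonempty → S ≠ Set.univ → B < setSum c {e | G.oneEnd S e})
    {R T : Set E} (hR : setSum c R ≤ B)
    (hT : T ⊆ (R \ {e | w e = 2 ^ p})ᶜ) (hconn : G.Connects T)
    {e : E} (heT : e ∈ T) (heR : e ∈ R) :
    ∃ T₂ : Set E, T₂ ⊆ (R \ {e | w e = 2 ^ p})ᶜ ∧ G.Connects T₂ ∧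
      setSum w T₂ ≤ setSum w T ∧ (T₂ ∩ R).ncard < (T ∩ R).ncard := by
  have hwe : w e = 2 ^ p := by
    by_contra hne
    exact hT heT ⟨heR, hne⟩
  by_cases hb : G.snd e ∈ G.component (T \ {e}) (G.fst e)
  · refine ⟨T \ {e}, fun x hx => hT hx.1,
      connects_swap G (le_refl _) (by exact hb) hconn,
      setSum_mono_s4 w Set.diff_subset, ?_⟩
    have h2 : (T \ {e}) ∩ R = (T ∩ R) \ {e} := by
      ext x
      simp only [Set.mem_inter_iff, Set.mem_diff, Set.mem_singleton_iff]
      tauto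
    rw [h2]
    exact Set.ncard_diff_singleton_lt_of_mem ⟨heT, heR⟩ (Set.toFinite _)
  · set S := G.component (T \ {e}) (G.fst e) with hSdef
    have hSne : S.Nonempty := ⟨G.fst e, EqvGen.refl _⟩
    have hSproper : S ≠ Set.univ := fun h => hb (h ▸ Set.mem_univ _)
    have hcc := hcut S hSne hSproper
    obtain ⟨f, hf, hfR⟩ : ∃ f, G.oneEnd S f ∧ f ∉ R := by
      by_contra hno
      push_neg at hno
      exact absurd (le_trans (setSum_mono_s4 c (fun f hf => hno f hf)) hR) (not_le.2 hcc)
    have hfe : f ≠ e := fun h => hfR (h ▸ heR)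
    have hfT : f ∉ T := by
      intro hfT
      have hfT' : f ∈ T \ {e} := ⟨hfT, hfe⟩
      rcases hf with ⟨h1, h2⟩ | ⟨h1, h2⟩
      · exact h2 (component_closed G h1 ⟨f, hfT', Or.inl ⟨rfl, rfl⟩⟩)
      · exact h1 (component_closed G h2 ⟨f, hfT', Or.inr ⟨rfl, rfl⟩⟩)
    have houtside : ∀ z, z ∉ S → EqvGen (G.rel (T \ {e})) z (G.snd e) := by
      intro z hz
      rcases split_lemma G T e (hconn z (G.snd e)) with h | ⟨h1, _⟩ | ⟨_, h2⟩
      · exact h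
      · exact (hz (EqvGen.symm _ _ h1)).elim
      · exact (hb (EqvGen.symm _ _ h2)).elim
    have hmono : ∀ x y, EqvGen (G.rel (T \ {e})) x y →
        EqvGen (G.rel (insert f (T \ {e}))) x y := by
      refine eqvGen_mono' ?_
      rintro x y ⟨e', he', hs⟩
      exact EqvGen.rel _ _ ⟨e', Set.mem_insert_of_mem _ he', hs⟩
    have hfedge : EqvGen (G.rel (insert f (T \ {e}))) (G.fst f) (G.snd f) :=
      EqvGen.rel _ _ ⟨f, Set.mem_insert _ _, Or.inl ⟨rfl, rfl⟩⟩
    have hab : EqvGen (G.rel (insert f (T \ {e}))) (G.fst e) (G.snd e) := by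
      rcases hf with ⟨h1, h2⟩ | ⟨h1, h2⟩
      · exact EqvGen.trans _ _ _ (hmono _ _ h1)
          (EqvGen.trans _ _ _ hfedge (hmono _ _ (houtside _ h2)))
      · exact EqvGen.trans _ _ _ (hmono _ _ h2)
          (EqvGen.trans _ _ _ (EqvGen.symm _ _ hfedge) (hmono _ _ (houtside _ h1)))
    have hwf : w f ≤ 2 ^ p := by
      rcases hw f with h | ⟨i, hi, h⟩
      · simp [h]
      · rw [h]; exact Nat.pow_le_pow_right (by norm_num) hi
    refine ⟨insert f (T \ {e}), ?_, connects_swap G (Set.subset_insert f _) hab hconn, ?_, ?_⟩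
    · rw [Set.insert_subset_iff]
      exact ⟨fun h => hfR h.1, fun x hx => hT hx.1⟩
    · have hs1 : setSum w (insert f (T \ {e})) = w f + setSum w (T \ {e}) :=
        setSum_insert w (fun h => hfT h.1)
      have hs2 : setSum w (T \ {e}) + w e = setSum w T := setSum_diff_singleton_add w heT
      omega
    · have h2 : (insert f (T \ {e})) ∩ R = (T ∩ R) \ {e} := by
        ext x
        simp only [Set.mem_inter_iff, Set.mem_insert_iff, Set.mem_diff, Set.mem_singleton_iff]
        constructor
        · rintro ⟨rfl | ⟨hxT, hxe⟩, hxR⟩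
          · exact absurd hxR hfR
          · exact ⟨⟨hxT, hxR⟩, hxe⟩
        · rintro ⟨⟨hxT, hxR⟩, hxe⟩
          exact ⟨Or.inr ⟨hxT, hxe⟩, hxR⟩
      rw [h2]
      exact Set.ncard_diff_singleton_lt_of_mem ⟨heT, heR⟩ (Set.toFinite _)

lemma reduce [Fintype E] (G : Multigraph V E) (w c : E → ℕ) (B p : ℕ)
    (hw : ∀ e, w e = 0 ∨ ∃ i ≤ p, w e = 2 ^ i)
    (hcut : ∀ S : Set V, S.Nonempty → S ≠ Set.univ → B < setSum c {e | G.oneEnd S e})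
    {R : Set E} (hR : setSum c R ≤ B) :
    ∀ n (T : Set E), T ⊆ (R \ {e | w e = 2 ^ p})ᶜ → G.Connects T → (T ∩ R).ncard ≤ n →
      ∃ T₂ : Set E, T₂ ⊆ Rᶜ ∧ G.Connects T₂ ∧ setSum w T₂ ≤ setSum w T := by
  intro n
  induction n with
  | zero =>
    intro T hsub hconn hcard
    have hne : ¬ (T ∩ R).Nonempty := by
      intro h
      have := (Set.ncard_pos (Set.toFinite _)).2 h
      omega
    exact ⟨T, fun x hx hxR => hne ⟨x, hx, hxR⟩, hconn, le_refl _⟩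
  | succ n ih =>
    intro T hsub hconn hcard
    by_cases hne : (T ∩ R).Nonempty
    · obtain ⟨e, heT, heR⟩ := hne
      obtain ⟨T', hsub', hconn', hsum', hcard'⟩ :=
        swap_step G w c B p hw hcut hR hsub hconn heT heR
      obtain ⟨T₂, a, b, c'⟩ := ih T' hsub' hconn' (by omega)
      exact ⟨T₂, a, b, le_trans c' hsum'⟩
    · exact ⟨T, fun x hx hxR => hne ⟨x, hx, hxR⟩, hconn, le_refl _⟩

lemma val_le_total [Fintype E] (G : Multigraph V E) (w : E → ℕ) (U : Set E) :
    G.val w U ≤ setSum w Set.univ := by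
  rcases Set.eq_empty_or_nonempty {n | ∃ T : Set E, T ⊆ Uᶜ ∧ G.Connects T ∧ setSum w T = n}
    with h | ⟨n, T, _, _, hn⟩
  · rw [Multigraph.val, h, Nat.sInf_empty]
    exact Nat.zero_le _
  · calc G.val w U ≤ n := Nat.sInf_le ⟨T, ‹_›, ‹_›, hn⟩
      _ = setSum w T := hn.symm
      _ ≤ setSum w Set.univ := setSum_mono_s4 w (Set.subset_univ T)


/-- If every nonempty proper vertex cut has interdiction cost exceeding
the budget, then there is an optimal interdiction set that avoids the heaviest edges
`E_p = {e : w(e) = 2^p}`. -/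
theorem exists_optimal_interdiction_avoiding_heaviest
    [Fintype V] [Fintype E]
    (G : Multigraph V E) (w : E → ℕ) (c : E → ℕ) (hc : ∀ e, 0 < c e)
    (B : ℕ) (hB : 0 < B) (p : ℕ) (hp : 1 ≤ p)
    (hw : ∀ e, w e = 0 ∨ ∃ i ≤ p, w e = 2 ^ i)
    (hcut : ∀ S : Set V, S.Nonempty → S ≠ Set.univ →
      B < setSum c {e | G.oneEnd S e}) :
    ∃ Rstar : Set E, setSum c Rstar ≤ B ∧
      Rstar ∩ {e | w e = 2 ^ p} = ∅ ∧
      ∀ R : Set E, setSum c R ≤ B → G.val w R ≤ G.val w Rstar := by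
  classical
  set vals : Set ℕ := {v | ∃ R : Set E, setSum c R ≤ B ∧ G.val w R = v} with hvals
  have hbdd : BddAbove vals := by
    refine ⟨setSum w Set.univ, ?_⟩
    rintro v ⟨R, _, rfl⟩
    exact val_le_total G w R
  have hne : vals.Nonempty := ⟨G.val w ∅, ∅, by simp [setSum, finsum_mem_empty], rfl⟩
  obtain ⟨R, hRB, hRval⟩ := Nat.sSup_mem hne hbdd
  set Rstar : Set E := R \ {e | w e = 2 ^ p} with hRstar
  have hRstarB : setSum c Rstar ≤ B := le_trans (setSum_mono_s4 c Set.diff_subset) hRB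
  refine ⟨Rstar, hRstarB, Set.diff_inter_self, ?_⟩
  intro R₂ hR₂
  have h1 : G.val w R₂ ≤ G.val w R := by
    rw [hRval]
    exact le_csSup hbdd ⟨R₂, hR₂, rfl⟩
  refine le_trans h1 ?_
  have hconn : G.Connects Rstarᶜ := connects_compl G c B hcut hRstarB
  have hsne : {n | ∃ T : Set E, T ⊆ Rstarᶜ ∧ G.Connects T ∧ setSum w T = n}.Nonempty :=
    ⟨setSum w Rstarᶜ, Rstarᶜ, subset_rfl, hconn, rfl⟩
  obtain ⟨T', hT'sub, hT'conn, hT'sum⟩ :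
      ∃ T : Set E, T ⊆ Rstarᶜ ∧ G.Connects T ∧ setSum w T = G.val w Rstar :=
    Nat.sInf_mem hsne
  obtain ⟨T₂, hT₂sub, hT₂conn, hT₂sum⟩ :=
    reduce G w c B p hw hcut hRB ((T' ∩ R).ncard) T' hT'sub hT'conn le_rfl
  calc G.val w R ≤ setSum w T₂ := Nat.sInf_le ⟨T₂, hT₂sub, hT₂conn, rfl⟩
    _ ≤ setSum w T' := hT₂sum
    _ = G.val w Rstar := hT'sum

end MSTInterdiction
end

section
/- Let λ≥0 be a real number and let U₁,U₂⊆E_{≤p−1} both minimize λ·c(U) − val(U) over all U⊆E_{≤p−1}, with c(U₁) ≤ B ≤ c(U₂) and c(U₁) < c(U₂). Then for every R⊆E_{≤p−1} with c(R)≤B, val(R) ≤ val(U₁) + (B − c(U₁))·(val(U₂) − val(U₁))/(c(U₂) − c(U₁)). -/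
namespace MSTInterdiction

variable {V E : Type*}

/-- If `U₁, U₂ ⊆ E_{≤p−1}` both minimize `λ·c(U) − val(U)` over
`U ⊆ E_{≤p−1}`, with `c(U₁) ≤ B ≤ c(U₂)` and `c(U₁) < c(U₂)`, then every
`R ⊆ E_{≤p−1}` with `c(R) ≤ B` satisfies
`val(R) ≤ val(U₁) + (B − c(U₁))·(val(U₂) − val(U₁))/(c(U₂) − c(U₁))`. -/
theorem upper_bound_from_extreme_supported_solutions
    [Fintype V] [Fintype E]
    (G : Multigraph V E) (w : E → ℕ) (c : E → ℕ) (hc : ∀ e, 0 < c e)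
    (B : ℕ) (hB : 0 < B) (p : ℕ) (hp : 1 ≤ p)
    (hw : ∀ e, w e = 0 ∨ ∃ i ≤ p, w e = 2 ^ i)
    (hEp : G.Connects {e | w e = 2 ^ p})
    (lam : ℝ) (hlam : 0 ≤ lam)
    (U₁ U₂ : Set E) (hU₁ : U₁ ⊆ Ele w ((p : ℤ) - 1)) (hU₂ : U₂ ⊆ Ele w ((p : ℤ) - 1))
    (hmin₁ : ∀ U : Set E, U ⊆ Ele w ((p : ℤ) - 1) →
      lam * (setSum c U₁ : ℝ) - (G.val w U₁ : ℝ) ≤ lam * (setSum c U : ℝ) - (G.val w U : ℝ))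
    (hmin₂ : ∀ U : Set E, U ⊆ Ele w ((p : ℤ) - 1) →
      lam * (setSum c U₂ : ℝ) - (G.val w U₂ : ℝ) ≤ lam * (setSum c U : ℝ) - (G.val w U : ℝ))
    (hc₁B : setSum c U₁ ≤ B) (hBc₂ : B ≤ setSum c U₂)
    (hc₁c₂ : setSum c U₁ < setSum c U₂) :
    ∀ R : Set E, R ⊆ Ele w ((p : ℤ) - 1) → setSum c R ≤ B →
      (G.val w R : ℝ) ≤ (G.val w U₁ : ℝ)
        + ((B : ℝ) - (setSum c U₁ : ℝ))
          * ((G.val w U₂ : ℝ) - (G.val w U₁ : ℝ))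
          / ((setSum c U₂ : ℝ) - (setSum c U₁ : ℝ)) := by
  intro R hR hcR
  have h1 := hmin₁ U₂ hU₂
  have h2 := hmin₂ U₁ hU₁
  have hd : (0:ℝ) < (setSum c U₂ : ℝ) - (setSum c U₁ : ℝ) := by
    have : (setSum c U₁ : ℝ) < (setSum c U₂ : ℝ) := by exact_mod_cast hc₁c₂
    linarith
  have hlameq : ((G.val w U₂ : ℝ) - (G.val w U₁ : ℝ)) =
      lam * ((setSum c U₂ : ℝ) - (setSum c U₁ : ℝ)) := by linarith
  have h3 := hmin₁ R hR
  have hcRB : (setSum c R : ℝ) ≤ (B : ℝ) := by exact_mod_cast hcR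
  have hc1B : (setSum c U₁ : ℝ) ≤ (B : ℝ) := by exact_mod_cast hc₁B
  rw [hlameq]
  have hne : ((setSum c U₂ : ℝ) - (setSum c U₁ : ℝ)) ≠ 0 := ne_of_gt hd
  have hsimp : ((B : ℝ) - (setSum c U₁ : ℝ)) *
      (lam * ((setSum c U₂ : ℝ) - (setSum c U₁ : ℝ)))
      / ((setSum c U₂ : ℝ) - (setSum c U₁ : ℝ))
      = ((B : ℝ) - (setSum c U₁ : ℝ)) * lam := by
    field_simp
  rw [hsimp]
  nlinarith [mul_le_mul_of_nonneg_left hcRB hlam]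

end MSTInterdiction
end

section
/- Let c₁, c₂, B, v₁, v₂ be real numbers with 0 < c₁ < B < c₂ and 0 ≤ v₁ ≤ v₂, satisfying the slope inequality (v₂ − v₁)/(c₂ − c₁) ≤ v₂/c₂, and set ν* = v₁ + (B − c₁)·(v₂ − v₁)/(c₂ − c₁). Then max( v₁ , (1/6)·B·v₂/c₂ ) ≥ ν*/7. -/
/-- The arithmetic core of the 7-approximation analysis (Case 3):
if `0 < c₁ < B < c₂`, `0 ≤ v₁ ≤ v₂`, and the slope inequality
`(v₂ − v₁)/(c₂ − c₁) ≤ v₂/c₂` holds, then with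
`ν* = v₁ + (B − c₁)·(v₂ − v₁)/(c₂ − c₁)` we have
`max(v₁, (1/6)·B·v₂/c₂) ≥ ν*/7`. -/
theorem case3_arithmetic
    (c₁ c₂ B v₁ v₂ : ℝ)
    (hc₁ : 0 < c₁) (hc₁B : c₁ < B) (hBc₂ : B < c₂)
    (hv₁ : 0 ≤ v₁) (hv₁v₂ : v₁ ≤ v₂)
    (hslope : (v₂ - v₁) / (c₂ - c₁) ≤ v₂ / c₂) :
    (v₁ + (B - c₁) * (v₂ - v₁) / (c₂ - c₁)) / 7
      ≤ max v₁ ((1 / 6) * B * v₂ / c₂) := by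
  have hc2 : 0 < c₂ := hc₁.trans (hc₁B.trans hBc₂)
  have hd : (0:ℝ) < c₂ - c₁ := by linarith
  have hv2 : 0 ≤ v₂ / c₂ := div_nonneg (by linarith) hc2.le
  have key : (B - c₁) * ((v₂ - v₁) / (c₂ - c₁)) ≤ (B - c₁) * (v₂ / c₂) :=
    mul_le_mul_of_nonneg_left hslope (by linarith)
  have key2 : (B - c₁) * (v₂ / c₂) ≤ B * (v₂ / c₂) :=
    mul_le_mul_of_nonneg_right (by linarith) hv2
  have h1 : v₁ ≤ max v₁ ((1 / 6) * B * v₂ / c₂) := le_max_left _ _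
  have h2 : (1 / 6) * B * v₂ / c₂ ≤ max v₁ ((1 / 6) * B * v₂ / c₂) := le_max_right _ _
  have e1 : (B - c₁) * (v₂ - v₁) / (c₂ - c₁) = (B - c₁) * ((v₂ - v₁) / (c₂ - c₁)) :=
    mul_div_assoc _ _ _
  have e2 : B * (v₂ / c₂) = 6 * ((1 / 6) * B * v₂ / c₂) := by ring
  linarith [key, key2, h1, h2]
end

section
/- Let 𝒲 be an efficient removal pattern, let i∈{−1,0,…,p}, and let A∈𝒜_i with κ_i(A) > 0. Then (κ_i^𝒲(A)/κ_i(A))·(g_i(A) − 2^i) ≤ g_i^𝒲(A) + 2^i. -/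
/-!
Induction on the level `i`, for the cross-multiplied inequality
`κ^𝒲_i(A) · (g_i(A) − 2^i) ≤ (g^𝒲_i(A) + 2^i) · κ_i(A)`, which unlike the quotient form also
holds when `κ_i(A) = 0` (then `κ^𝒲_i(A) ≤ κ_i(A)` vanishes too); the induction needs it for
children of cost zero.

If `A` itself is in `𝒲`, or no member of `𝒲` lies strictly below `A`, the bound is immediate.
Otherwise efficiency lists the children `Q_0, …, Q_{h-1}` of `A` by decreasing `ρ_{i-1}`: exactly
`Q_0, …, Q_{s-1}` are removed and every lower member of `𝒲` lies in `Q_s`. Since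
`g_i(A) = 2^i + Σ_k g_{i-1}(Q_k)` and `Σ_k κ_{i-1}(Q_k) ≤ κ_i(A)` (a `U`-edge is charged once
per endpoint), what remains is a mediant inequality: the removed children have ratio at least
`ρ_{i-1}(Q_s)`, the others at most, and the induction hypothesis for `Q_s` loses `2^{i-1}` twice,
i.e. `2^i`.
-/

namespace MSTInterdiction

variable {V E : Type*}

section Patterns

variable [Fintype V] [Fintype E]

/-- The auxiliary cost `κ_i(A)`: the cost of edges of `U_{≤i} = U ∩ E_{≤i}` with exactly
one endpoint in `A`, plus twice the cost of those with both endpoints in `A`. -/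
noncomputable def kappa (G : Multigraph V E) (w c : E → ℕ) (U : Set E)
    (i : ℤ) (A : Set V) : ℕ :=
  setSum c {e | e ∈ U ∩ Ele w i ∧ G.oneEnd A e}
    + 2 * setSum c {e | e ∈ U ∩ Ele w i ∧ G.twoEnds A e}

/-- The auxiliary impact `g_i(A) = |{D ∈ 𝒜_{−1} : D ⊆ A}| + Σ_{ℓ=0}^{i} 2^ℓ·|{D ∈ 𝒜_ℓ : D ⊆ A}|`,
where `𝒜_ℓ` is the partition of `V` into connected components of `(V, E_{≤ℓ} ∖ U)`. -/
noncomputable def gfun (G : Multigraph V E) (w : E → ℕ) (U : Set E)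
    (i : ℤ) (A : Set V) : ℕ :=
  Nat.card {D : Set V | D ∈ G.parts (Ele w (-1) \ U) ∧ D ⊆ A}
    + ∑ ℓ ∈ Finset.range (i + 1).toNat,
        2 ^ ℓ * Nat.card {D : Set V | D ∈ G.parts (Ele w (ℓ : ℤ) \ U) ∧ D ⊆ A}

/-- A removal pattern: a finite family of tuples `(W, i)` with `i ∈ {−1, …, p−1}`,
`W ∈ 𝒜_i`, and the sets `W` pairwise disjoint. -/
structure IsRemovalPattern (G : Multigraph V E) (w : E → ℕ) (U : Set E) (p : ℕ)
    (𝒲 : Set (Set V × ℤ)) : Prop where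
  finite : 𝒲.Finite
  levels : ∀ x ∈ 𝒲, -1 ≤ x.2 ∧ x.2 ≤ (p : ℤ) - 1
  parts : ∀ x ∈ 𝒲, x.1 ∈ G.parts (Ele w x.2 \ U)
  disjoint : ∀ x ∈ 𝒲, ∀ y ∈ 𝒲, x ≠ y → Disjoint x.1 y.1

/-- The removal set `R(𝒲) = ⋃_{(W,i) ∈ 𝒲} {e ∈ U_{≤i} : exactly one endpoint of e in W}`. -/
def removalSet (G : Multigraph V E) (w : E → ℕ) (U : Set E)
    (𝒲 : Set (Set V × ℤ)) : Set E :=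
  {e | ∃ x ∈ 𝒲, e ∈ U ∩ Ele w x.2 ∧ G.oneEnd x.1 e}

/-- `κ_i^𝒲(A) = Σ κ_j(W)` over `(W,j) ∈ 𝒲` with `W ⊆ A` and `j ≤ i`. -/
noncomputable def kappaW (G : Multigraph V E) (w c : E → ℕ) (U : Set E)
    (𝒲 : Set (Set V × ℤ)) (i : ℤ) (A : Set V) : ℕ :=
  ∑ᶠ x ∈ {x ∈ 𝒲 | x.1 ⊆ A ∧ x.2 ≤ i}, kappa G w c U x.2 x.1

/-- `g_i^𝒲(A) = Σ g_j(W)` over `(W,j) ∈ 𝒲` with `W ⊆ A` and `j ≤ i`. -/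
noncomputable def gW (G : Multigraph V E) (w : E → ℕ) (U : Set E)
    (𝒲 : Set (Set V × ℤ)) (i : ℤ) (A : Set V) : ℕ :=
  ∑ᶠ x ∈ {x ∈ 𝒲 | x.1 ⊆ A ∧ x.2 ≤ i}, gfun G w U x.2 x.1

/-- An *efficient* removal pattern: for every level `i ∈ {0,…,p}` and every `A ∈ 𝒜_i`,
either no member of `𝒲` on a level below `i` is contained in `A`, or all members of `𝒲`
on levels below `i` are contained in `A` and there is a numbering `Q_0, …, Q_{h-1}`
of the children `𝒞_i(A)` by nonincreasing auxiliary efficiency `ρ_{i-1} = g_{i-1}/κ_{i-1}`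
(expressed by cross-multiplication, which encodes the convention `ρ = ∞` when `κ = 0`)
and an index `s ≤ h` such that exactly `Q_0, …, Q_{s-1}` belong to `𝒲` on level `i−1`
and every member of `𝒲` on a level `≤ i−2` is contained in `Q_s`. -/
def IsEfficient (G : Multigraph V E) (w c : E → ℕ) (U : Set E) (p : ℕ)
    (𝒲 : Set (Set V × ℤ)) : Prop :=
  ∀ i : ℤ, 0 ≤ i → i ≤ (p : ℤ) → ∀ A ∈ G.parts (Ele w i \ U),
    (∀ x ∈ 𝒲, x.2 < i → ¬x.1 ⊆ A) ∨
    ((∀ x ∈ 𝒲, x.2 < i → x.1 ⊆ A) ∧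
      ∃ (h : ℕ) (Q : Fin h → Set V) (s : ℕ),
        Function.Injective Q ∧
        (∀ D : Set V, (D ∈ G.parts (Ele w (i - 1) \ U) ∧ D ⊆ A) ↔ ∃ k, Q k = D) ∧
        (∀ j k : Fin h, j ≤ k →
          gfun G w U (i - 1) (Q k) * kappa G w c U (i - 1) (Q j)
            ≤ gfun G w U (i - 1) (Q j) * kappa G w c U (i - 1) (Q k)) ∧
        s ≤ h ∧
        (∀ k : Fin h, (k : ℕ) < s → (Q k, i - 1) ∈ 𝒲) ∧
        (∀ k : Fin h, s ≤ (k : ℕ) → (Q k, i - 1) ∉ 𝒲) ∧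
        (∀ x ∈ 𝒲, x.2 ≤ i - 2 → ∃ hs : s < h, x.1 ⊆ Q ⟨s, hs⟩))


end Patterns

end MSTInterdiction

theorem Finset.sum_eq_sum_Iio_add_add_sum_Ioi {α M : Type*} [Fintype α] [LinearOrder α]
    [LocallyFiniteOrderBot α] [LocallyFiniteOrderTop α] [AddCommMonoid M] (f : α → M) (a : α) :
    ∑ x, f x = ∑ x ∈ Iio a, f x + (f a + ∑ x ∈ Ioi a, f x) := by
  rw [add_sum_Ioi_eq_sum_Ici, ← sum_union (disjoint_left.2 fun x hlt hge =>
    (mem_Ici.1 hge).not_gt (mem_Iio.1 hlt))]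
  congr
  ext x
  simp [lt_or_ge]

theorem Finset.sum_mul_sum_le_sum_mul_sum {ι R : Type*} [Semiring R] [PartialOrder R]
    [IsOrderedAddMonoid R] (s t : Finset ι) (f g : ι → R)
    (h : ∀ j ∈ s, ∀ k ∈ t, g k * f j ≤ g j * f k) :
    (∑ k ∈ t, g k) * ∑ j ∈ s, f j ≤ (∑ j ∈ s, g j) * ∑ k ∈ t, f k := by
  rw [sum_mul_sum, sum_mul_sum, sum_comm]
  exact sum_le_sum fun j hj => sum_le_sum fun k hk => h j hj k hk

namespace MSTInterdiction

variable {V E : Type*}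

lemma Ele_mono_s13 (w : E → ℕ) {j i : ℤ} (h : j ≤ i) : Ele w j ⊆ Ele w i := by
  rintro e (h0 | ⟨ℓ, hℓ, he⟩)
  · exact Or.inl h0
  · exact Or.inr ⟨ℓ, hℓ.trans h, he⟩

lemma Ele_diff_mono (w : E → ℕ) (U : Set E) {j i : ℤ} (h : j ≤ i) :
    Ele w j \ U ⊆ Ele w i \ U :=
  Set.sdiff_subset_sdiff_left (Ele_mono_s13 w h)

namespace Multigraph

variable (G : Multigraph V E) {S T T' : Set E} {A B : Set V}

lemma mem_component_self (S : Set E) (v : V) : v ∈ G.component S v :=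
  Relation.EqvGen.refl v

lemma component_eq_of_mem {u v : V} (h : u ∈ G.component S v) :
    G.component S u = G.component S v := by
  ext x
  exact ⟨fun hx => Relation.EqvGen.trans _ _ _ h hx,
    fun hx => Relation.EqvGen.trans _ _ _ (Relation.EqvGen.symm _ _ h) hx⟩

lemma nonempty_of_mem_parts (hA : A ∈ G.parts S) : A.Nonempty := by
  obtain ⟨v, rfl⟩ := hA
  exact ⟨v, G.mem_component_self S v⟩

lemma eq_of_mem_parts_of_subset (hA : A ∈ G.parts S) (hB : B ∈ G.parts S) (h : A ⊆ B) :
    A = B := by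
  obtain ⟨v, rfl⟩ := hA
  obtain ⟨u, rfl⟩ := hB
  exact G.component_eq_of_mem (h (G.mem_component_self S v))

lemma disjoint_of_mem_parts (hA : A ∈ G.parts S) (hB : B ∈ G.parts S) (hne : A ≠ B) :
    Disjoint A B := by
  obtain ⟨v, rfl⟩ := hA
  obtain ⟨u, rfl⟩ := hB
  refine Set.disjoint_left.2 fun x hxv hxu => hne ?_
  rw [← G.component_eq_of_mem hxv, G.component_eq_of_mem hxu]

lemma component_subset_of_mem_parts (hST : S ⊆ T) (hA : A ∈ G.parts T) {v : V} (hv : v ∈ A) :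
    G.component S v ⊆ A := by
  obtain ⟨u, rfl⟩ := hA
  rw [← G.component_eq_of_mem hv]
  exact fun x hx => Relation.EqvGen.mono (r := G.rel S) (p := G.rel T)
    (fun a b ⟨e, he, hab⟩ => ⟨e, hST he, hab⟩) _ _ hx

def Enumerates {m : ℕ} (S : Set E) (A : Set V) (Q : Fin m → Set V) : Prop :=
  Function.Injective Q ∧ ∀ D, (D ∈ G.parts S ∧ D ⊆ A) ↔ ∃ k, Q k = D

namespace Enumerates

variable {G} {m : ℕ} {Q : Fin m → Set V}

lemma mem_parts (hQ : G.Enumerates S A Q) (k : Fin m) : Q k ∈ G.parts S :=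
  ((hQ.2 _).2 ⟨k, rfl⟩).1

lemma subset (hQ : G.Enumerates S A Q) (k : Fin m) : Q k ⊆ A :=
  ((hQ.2 _).2 ⟨k, rfl⟩).2

lemma pairwise_disjoint (hQ : G.Enumerates S A Q) : Pairwise (Function.onFun Disjoint Q) :=
  fun j k hjk => G.disjoint_of_mem_parts (hQ.mem_parts j) (hQ.mem_parts k) (hQ.1.ne hjk)

lemma exists_mem (hQ : G.Enumerates T A Q) (hTT' : T ⊆ T') (hA : A ∈ G.parts T') {v : V}
    (hv : v ∈ A) : ∃ k, v ∈ Q k := by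
  obtain ⟨k, hk⟩ := (hQ.2 _).1 ⟨⟨v, rfl⟩, G.component_subset_of_mem_parts hTT' hA hv⟩
  exact ⟨k, hk ▸ G.mem_component_self T v⟩

end Enumerates

noncomputable def endpointCount (A : Set V) (e : E) : ℕ :=
  A.indicator 1 (G.fst e) + A.indicator 1 (G.snd e)

lemma sum_endpointCount_le {ι : Type*} {t : Finset ι} {W : ι → Set V}
    (hW : (t : Set ι).PairwiseDisjoint W) (hWB : ∀ x ∈ t, W x ⊆ B) (e : E) :
    ∑ x ∈ t, G.endpointCount (W x) e ≤ G.endpointCount B e := by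
  have hcount (v : V) : ∑ x ∈ t, (W x).indicator (1 : V → ℕ) v ≤ B.indicator 1 v := by
    rw [← Finset.indicator_biUnion_apply t W hW]
    exact Set.indicator_le_indicator_of_subset (Set.iUnion₂_subset hWB) (fun _ => Nat.zero_le _) v
  simpa only [endpointCount, Finset.sum_add_distrib] using add_le_add (hcount _) (hcount _)

def partsIn (S : Set E) (B : Set V) : Set (Set V) :=
  {D | D ∈ G.parts S ∧ D ⊆ B}

lemma partsIn_of_mem_parts (hA : A ∈ G.parts S) : G.partsIn S A = {A} := by
  ext D
  exact ⟨fun ⟨hD, hDA⟩ => G.eq_of_mem_parts_of_subset hD hA hDA, by rintro rfl; exact ⟨hA, le_rfl⟩⟩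

lemma partsIn_eq_iUnion {m : ℕ} {Q : Fin m → Set V} (hQ : G.Enumerates T A Q) (hST : S ⊆ T)
    (hTT' : T ⊆ T') (hA : A ∈ G.parts T') : G.partsIn S A = ⋃ k, G.partsIn S (Q k) := by
  ext D
  refine ⟨fun ⟨hD, hDA⟩ => ?_, fun hD => ?_⟩
  · obtain ⟨v, hv⟩ := G.nonempty_of_mem_parts hD
    obtain ⟨k, hk⟩ := hQ.exists_mem hTT' hA (hDA hv)
    obtain ⟨u, rfl⟩ := hD
    refine Set.mem_iUnion.2 ⟨k, ⟨u, rfl⟩, ?_⟩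
    rw [← G.component_eq_of_mem hv]
    exact G.component_subset_of_mem_parts hST (hQ.mem_parts k) hk
  · obtain ⟨k, hD, hDQ⟩ := Set.mem_iUnion.1 hD
    exact ⟨hD, hDQ.trans (hQ.subset k)⟩

lemma ncard_partsIn_eq_sum [Finite V] {m : ℕ} {Q : Fin m → Set V} (hQ : G.Enumerates T A Q)
    (hST : S ⊆ T) (hTT' : T ⊆ T') (hA : A ∈ G.parts T') :
    (G.partsIn S A).ncard = ∑ k, (G.partsIn S (Q k)).ncard := by
  rw [G.partsIn_eq_iUnion hQ hST hTT' hA,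
    Set.ncard_iUnion_of_finite (fun _ => Set.toFinite _) ?_, finsum_eq_sum_of_fintype]
  intro j k hjk
  refine Set.disjoint_left.2 fun D ⟨hD, hDj⟩ ⟨_, hDk⟩ => ?_
  obtain ⟨v, hv⟩ := G.nonempty_of_mem_parts hD
  exact Set.disjoint_left.1 (hQ.pairwise_disjoint hjk) (hDj hv) (hDk hv)

end Multigraph

section Cost

variable (G : Multigraph V E) (w c : E → ℕ) (U : Set E)

lemma setSum_eq_sum [Fintype E] (S : Set E) : setSum c S = ∑ e, S.indicator c e := by
  rw [setSum, finsum_mem_def, finsum_eq_sum_of_fintype]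

lemma kappa_eq_sum [Fintype E] (i : ℤ) (A : Set V) :
    kappa G w c U i A = ∑ e, c e * (U ∩ Ele w i).indicator (G.endpointCount A) e := by
  rw [kappa, setSum_eq_sum, setSum_eq_sum, Finset.mul_sum, ← Finset.sum_add_distrib]
  refine Finset.sum_congr rfl fun e _ => ?_
  by_cases he : e ∈ U ∩ Ele w i <;> by_cases h1 : G.fst e ∈ A <;> by_cases h2 : G.snd e ∈ A <;>
    simp [Set.indicator, Multigraph.endpointCount, Multigraph.oneEnd, Multigraph.twoEnds,
      he, h1, h2, mul_comm]

lemma sum_kappa_le [Fintype E] {ι : Type*} (t : Finset ι) (W : ι → Set V) (j : ι → ℤ) {i : ℤ}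
    {B : Set V} (hW : (t : Set ι).PairwiseDisjoint W) (hWB : ∀ x ∈ t, W x ⊆ B)
    (hj : ∀ x ∈ t, j x ≤ i) :
    ∑ x ∈ t, kappa G w c U (j x) (W x) ≤ kappa G w c U i B := by
  simp only [kappa_eq_sum]
  calc ∑ x ∈ t, ∑ e, c e * (U ∩ Ele w (j x)).indicator (G.endpointCount (W x)) e
      ≤ ∑ x ∈ t, ∑ e, c e * (U ∩ Ele w i).indicator (G.endpointCount (W x)) e := by
        gcongr with x hx e
        exact Ele_mono_s13 w (hj x hx)
    _ ≤ ∑ e, c e * (U ∩ Ele w i).indicator (G.endpointCount B) e := by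
        rw [Finset.sum_comm]
        gcongr with e
        by_cases he : e ∈ U ∩ Ele w i
        · simp only [Set.indicator_of_mem he, ← Finset.mul_sum]
          exact Nat.mul_le_mul_left _ (G.sum_endpointCount_le hW hWB e)
        · simp [Set.indicator_of_notMem he]

lemma gfun_eq (i : ℤ) (A : Set V) :
    gfun G w U i A = (G.partsIn (Ele w (-1) \ U) A).ncard
      + ∑ ℓ ∈ Finset.range (i + 1).toNat, 2 ^ ℓ * (G.partsIn (Ele w ℓ \ U) A).ncard := by
  simp only [gfun, Multigraph.partsIn, Nat.card_coe_set_eq]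

lemma gfun_eq_two_zpow_add_sum [Finite V] {i : ℤ} (hi : 0 ≤ i) {A : Set V}
    (hA : A ∈ G.parts (Ele w i \ U)) {m : ℕ} {Q : Fin m → Set V}
    (hQ : G.Enumerates (Ele w (i - 1) \ U) A Q) :
    (gfun G w U i A : ℝ) = 2 ^ i + ∑ k, (gfun G w U (i - 1) (Q k) : ℝ) := by
  obtain ⟨n, rfl⟩ := Int.eq_ofNat_of_zero_le hi
  have hsplit {ℓ : ℤ} (hℓ : ℓ ≤ n - 1) :=
    G.ncard_partsIn_eq_sum hQ (Ele_diff_mono w U hℓ) (Ele_diff_mono w U (by omega)) hA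
  have hlevels : ∑ ℓ ∈ Finset.range n, 2 ^ ℓ * (G.partsIn (Ele w ℓ \ U) A).ncard
      = ∑ k, ∑ ℓ ∈ Finset.range n, 2 ^ ℓ * (G.partsIn (Ele w ℓ \ U) (Q k)).ncard := by
    rw [Finset.sum_comm]
    refine Finset.sum_congr rfl fun ℓ hℓ => ?_
    rw [← Finset.mul_sum, hsplit (by simp at hℓ; omega)]
  simp only [gfun_eq, show ((n : ℤ) + 1).toNat = n + 1 by omega,
    show ((n : ℤ) - 1 + 1).toNat = n by omega, Finset.sum_range_succ,
    G.partsIn_of_mem_parts hA, Set.ncard_singleton, hlevels, hsplit (by omega : (-1 : ℤ) ≤ n - 1),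
    zpow_natCast]
  push_cast [Finset.sum_add_distrib]
  ring

end Cost

def members (𝒲 : Set (Set V × ℤ)) (j : ℤ) (B : Set V) : Set (Set V × ℤ) :=
  {x ∈ 𝒲 | x.1 ⊆ B ∧ x.2 ≤ j}

lemma kappaW_eq_finsum (G : Multigraph V E) (w c : E → ℕ) (U : Set E) (𝒲 : Set (Set V × ℤ))
    (j : ℤ) (B : Set V) :
    kappaW G w c U 𝒲 j B = ∑ᶠ x ∈ members 𝒲 j B, kappa G w c U x.2 x.1 := rfl

lemma gW_eq_finsum (G : Multigraph V E) (w : E → ℕ) (U : Set E) (𝒲 : Set (Set V × ℤ))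
    (j : ℤ) (B : Set V) : gW G w U 𝒲 j B = ∑ᶠ x ∈ members 𝒲 j B, gfun G w U x.2 x.1 := rfl

namespace IsRemovalPattern

variable {G : Multigraph V E} {w : E → ℕ} {U : Set E} {p : ℕ} {𝒲 : Set (Set V × ℤ)}
  {i : ℤ} {A B : Set V}

lemma eq_of_subset (hRP : IsRemovalPattern G w U p 𝒲) {x : Set V × ℤ} (hx : x ∈ 𝒲)
    (hB : B ∈ G.parts (Ele w i \ U)) (hxi : x.2 = i) (hxB : x.1 ⊆ B) : x = (B, i) := by
  have hx' := hRP.parts x hx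
  rw [hxi] at hx'
  exact Prod.ext (G.eq_of_mem_parts_of_subset hx' hB hxB) hxi

lemma kappaW_le_kappa [Fintype E] (hRP : IsRemovalPattern G w U p 𝒲) (c : E → ℕ) (j : ℤ)
    (B : Set V) : kappaW G w c U 𝒲 j B ≤ kappa G w c U j B := by
  have hfin : (members 𝒲 j B).Finite := hRP.finite.subset fun x hx => hx.1
  rw [kappaW_eq_finsum, finsum_mem_eq_finite_toFinset_sum _ hfin]
  refine sum_kappa_le G w c U _ Prod.fst Prod.snd ?_ (fun x hx => (hfin.mem_toFinset.1 hx).2.1)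
    (fun x hx => (hfin.mem_toFinset.1 hx).2.2)
  rw [hfin.coe_toFinset]
  exact fun x hx y hy hxy => hRP.disjoint x hx.1 y hy.1 hxy

lemma members_subset_singleton_of_mem (hRP : IsRemovalPattern G w U p 𝒲) (hAW : (A, i) ∈ 𝒲) :
    members 𝒲 i A ⊆ {(A, i)} := by
  rintro x ⟨hx, hxA, -⟩
  by_contra hne
  obtain ⟨v, hv⟩ := G.nonempty_of_mem_parts (hRP.parts x hx)
  exact Set.disjoint_left.1 (hRP.disjoint x hx _ hAW hne) hv (hxA hv)

lemma members_subset_singleton (hRP : IsRemovalPattern G w U p 𝒲)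
    (hA : A ∈ G.parts (Ele w i \ U)) (hbelow : ∀ x ∈ 𝒲, x.2 < i → ¬x.1 ⊆ A) :
    members 𝒲 i A ⊆ {(A, i)} := by
  rintro x ⟨hx, hxA, hxi⟩
  exact hRP.eq_of_subset hx hA (hxi.eq_of_not_lt fun h => hbelow x hx h hxA) hxA

lemma finsum_members_eq_sum_add (hRP : IsRemovalPattern G w U p 𝒲)
    (hA : A ∈ G.parts (Ele w i \ U)) (hAW : (A, i) ∉ 𝒲) {m : ℕ} {Q : Fin m → Set V}
    (hQ : G.Enumerates (Ele w (i - 1) \ U) A Q) {P : Finset (Fin m)}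
    (hin : ∀ k ∈ P, (Q k, i - 1) ∈ 𝒲) (hout : ∀ k ∉ P, (Q k, i - 1) ∉ 𝒲)
    (F : Set V × ℤ → ℕ) :
    ∑ᶠ x ∈ members 𝒲 i A, F x = ∑ k ∈ P, F (Q k, i - 1) + ∑ᶠ x ∈ members 𝒲 (i - 2) A, F x := by
  have hsplit : members 𝒲 i A = (fun k => (Q k, i - 1)) '' ↑P ∪ members 𝒲 (i - 2) A := by
    ext x
    constructor
    · rintro ⟨hx, hxA, hxi⟩
      obtain hxi | hxi | hxi : x.2 = i ∨ x.2 = i - 1 ∨ x.2 ≤ i - 2 := by omega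
      · exact absurd (hRP.eq_of_subset hx hA hxi hxA ▸ hx) hAW
      · obtain ⟨k, hk⟩ := (hQ.2 x.1).1 ⟨hxi ▸ hRP.parts x hx, hxA⟩
        have hxk : (Q k, i - 1) = x := Prod.ext hk hxi.symm
        exact Or.inl ⟨k, by_contra fun hkP => hout k hkP (hxk ▸ hx), hxk⟩
      · exact Or.inr ⟨hx, hxA, hxi⟩
    · rintro (⟨k, hk, rfl⟩ | ⟨hx, hxA, hxi⟩)
      · exact ⟨hin k hk, hQ.subset k, by simp⟩
      · exact ⟨hx, hxA, by omega⟩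
  have hdisj : Disjoint ((fun k => (Q k, i - 1)) '' ↑P) (members 𝒲 (i - 2) A) := by
    refine Set.disjoint_left.2 fun x ⟨k, _, hk⟩ hx => ?_
    have hlevel := hx.2.2
    rw [← hk] at hlevel
    simp only at hlevel
    omega
  rw [hsplit, finsum_mem_union hdisj (Set.toFinite _) (hRP.finite.subset fun x hx => hx.1),
    finsum_mem_image fun a _ b _ hab => hQ.1 (congrArg Prod.fst hab), finsum_mem_coe_finset]

lemma members_sub_two_eq (hRP : IsRemovalPattern G w U p 𝒲)
    (hB : B ∈ G.parts (Ele w (i - 1) \ U)) (hBA : B ⊆ A) (hBW : (B, i - 1) ∉ 𝒲)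
    (hlow : ∀ x ∈ 𝒲, x.2 ≤ i - 2 → x.1 ⊆ B) : members 𝒲 (i - 2) A = members 𝒲 (i - 1) B := by
  ext x
  constructor
  · rintro ⟨hx, -, hxi⟩
    exact ⟨hx, hlow x hx hxi, by omega⟩
  · rintro ⟨hx, hxB, hxi⟩
    refine ⟨hx, hxB.trans hBA, ?_⟩
    by_contra hlt
    exact hBW (hRP.eq_of_subset hx hB (by omega) hxB ▸ hx)

lemma finsum_members_eq_sum_Iio_add (hRP : IsRemovalPattern G w U p 𝒲)
    (hA : A ∈ G.parts (Ele w i \ U)) (hAW : (A, i) ∉ 𝒲) {m : ℕ} {Q : Fin m → Set V}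
    (hQ : G.Enumerates (Ele w (i - 1) \ U) A Q) (σ : Fin m) (hin : ∀ k < σ, (Q k, i - 1) ∈ 𝒲)
    (hout : ∀ k, σ ≤ k → (Q k, i - 1) ∉ 𝒲) (hlow : ∀ x ∈ 𝒲, x.2 ≤ i - 2 → x.1 ⊆ Q σ)
    (F : Set V × ℤ → ℕ) :
    ∑ᶠ x ∈ members 𝒲 i A, F x
      = ∑ k ∈ Finset.Iio σ, F (Q k, i - 1) + ∑ᶠ x ∈ members 𝒲 (i - 1) (Q σ), F x := by
  rw [hRP.finsum_members_eq_sum_add hA hAW hQ (fun k hk => hin k (Finset.mem_Iio.1 hk))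
      (fun k hk => hout k (not_lt.1 (mt Finset.mem_Iio.2 hk))),
    hRP.members_sub_two_eq (hQ.mem_parts σ) (hQ.subset σ) (hout σ le_rfl) hlow]

lemma finsum_members_eq_sum (hRP : IsRemovalPattern G w U p 𝒲)
    (hA : A ∈ G.parts (Ele w i \ U)) (hAW : (A, i) ∉ 𝒲) {m : ℕ} {Q : Fin m → Set V}
    (hQ : G.Enumerates (Ele w (i - 1) \ U) A Q) (hin : ∀ k, (Q k, i - 1) ∈ 𝒲)
    (hlow : ∀ x ∈ 𝒲, ¬x.2 ≤ i - 2) (F : Set V × ℤ → ℕ) :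
    ∑ᶠ x ∈ members 𝒲 i A, F x = ∑ k, F (Q k, i - 1) := by
  rw [hRP.finsum_members_eq_sum_add hA hAW hQ (fun k _ => hin k)
      (fun k hk => absurd (Finset.mem_univ k) hk),
    show members 𝒲 (i - 2) A = ∅ from
      Set.eq_empty_of_forall_notMem fun x hx => hlow x hx.1 hx.2.2, finsum_mem_empty, add_zero]

end IsRemovalPattern

/-- `κ₁, g₁`: the removed children; `κ₂, g₂`: the child `Q_s`; `κ₃, g₃`: the other children;
`κ', g'`: the part of the pattern inside `Q_s`; `d = 2^(i-1)`. -/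
lemma mediant_bound {κ₁ g₁ κ₂ g₂ κ₃ g₃ κ' g' d κ : ℝ} (hκ₁ : 0 ≤ κ₁) (hg₁ : 0 ≤ g₁)
    (hκ₂ : 0 ≤ κ₂) (hκ₃ : 0 ≤ κ₃) (hκ' : 0 ≤ κ') (hg' : 0 ≤ g') (hd : 0 ≤ d)
    (hκ : κ₁ + κ₂ + κ₃ ≤ κ) (h₁₂ : g₂ * κ₁ ≤ g₁ * κ₂) (h₁₃ : g₃ * κ₁ ≤ g₁ * κ₃)
    (h₂₃ : g₃ * κ₂ ≤ g₂ * κ₃) (hκ'₂ : κ' ≤ κ₂) (hIH : κ' * (g₂ - d) ≤ (g' + d) * κ₂) :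
    (κ₁ + κ') * (g₁ + g₂ + g₃) ≤ (g₁ + g' + 2 * d) * κ := by
  have hIH' : κ' * g₂ ≤ (g' + 2 * d) * κ₂ := by nlinarith [mul_le_mul_of_nonneg_left hκ'₂ hd]
  have hmed : (κ₁ + κ') * (g₁ + g₂ + g₃) ≤ (g₁ + g' + 2 * d) * (κ₁ + κ₂ + κ₃) := by
    rcases hκ₂.eq_or_lt with h0 | hpos
    · obtain rfl : κ' = 0 := le_antisymm (h0 ▸ hκ'₂) hκ'
      subst h0
      nlinarith [mul_nonneg hg' hκ₁, mul_nonneg hg' hκ₃, mul_nonneg hd hκ₁, mul_nonneg hd hκ₃]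
    · -- `κ₂ · (rhs − lhs)` is the sum of the four products below
      refine le_of_mul_le_mul_left ?_ hpos
      nlinarith [mul_nonneg (sub_nonneg.2 h₁₂) (sub_nonneg.2 hκ'₂),
        mul_nonneg (sub_nonneg.2 hIH') (by positivity : 0 ≤ κ₁ + κ₂ + κ₃),
        mul_nonneg (sub_nonneg.2 h₁₃) hκ₂, mul_nonneg (sub_nonneg.2 h₂₃) hκ']
  exact hmed.trans (mul_le_mul_of_nonneg_left hκ (by positivity))

def RatioBound (G : Multigraph V E) (w c : E → ℕ) (U : Set E) (𝒲 : Set (Set V × ℤ)) (i : ℤ)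
    (A : Set V) : Prop :=
  (kappaW G w c U 𝒲 i A : ℝ) * (gfun G w U i A - (2 : ℝ) ^ i)
    ≤ (gW G w U 𝒲 i A + (2 : ℝ) ^ i) * kappa G w c U i A

section RatioBound

variable {G : Multigraph V E} {w c : E → ℕ} {U : Set E} {p : ℕ} {𝒲 : Set (Set V × ℤ)}
  {i : ℤ} {A : Set V}

lemma ratioBound_of_members_subset_singleton (h : members 𝒲 i A ⊆ {(A, i)}) :
    RatioBound G w c U 𝒲 i A := by
  have he : (0 : ℝ) < 2 ^ i := zpow_pos two_pos i
  rcases Set.subset_singleton_iff_eq.1 h with h | h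
  · simp only [RatioBound, kappaW_eq_finsum, h, finsum_mem_empty, Nat.cast_zero, zero_mul]
    positivity
  · simp only [RatioBound, kappaW_eq_finsum, gW_eq_finsum, h, finsum_mem_singleton]
    nlinarith [mul_nonneg he.le (Nat.cast_nonneg (α := ℝ) (kappa G w c U i A))]

lemma ratioBound_of_all_removed [Fintype E] [Finite V] (hRP : IsRemovalPattern G w U p 𝒲)
    (hi : 0 ≤ i) (hA : A ∈ G.parts (Ele w i \ U)) (hAW : (A, i) ∉ 𝒲) {m : ℕ}
    {Q : Fin m → Set V} (hQ : G.Enumerates (Ele w (i - 1) \ U) A Q)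
    (hin : ∀ k, (Q k, i - 1) ∈ 𝒲) (hlow : ∀ x ∈ 𝒲, ¬x.2 ≤ i - 2) :
    RatioBound G w c U 𝒲 i A := by
  have hK : kappaW G w c U 𝒲 i A = ∑ k, kappa G w c U (i - 1) (Q k) :=
    hRP.finsum_members_eq_sum hA hAW hQ hin hlow _
  have hG : gW G w U 𝒲 i A = ∑ k, gfun G w U (i - 1) (Q k) :=
    hRP.finsum_members_eq_sum hA hAW hQ hin hlow _
  have hκA : ∑ k, kappa G w c U (i - 1) (Q k) ≤ kappa G w c U i A :=
    sum_kappa_le G w c U _ Q (fun _ => i - 1) (hQ.pairwise_disjoint.set_pairwise _)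
      (fun k _ => hQ.subset k) (fun _ _ => by omega)
  rify at hκA
  rw [RatioBound, hK, hG, gfun_eq_two_zpow_add_sum G w U hi hA hQ, add_sub_cancel_left]
  push_cast
  have he : (0 : ℝ) < 2 ^ i := zpow_pos two_pos i
  have hg : (0 : ℝ) ≤ ∑ k, (gfun G w U (i - 1) (Q k) : ℝ) :=
    Finset.sum_nonneg fun _ _ => Nat.cast_nonneg _
  nlinarith [mul_le_mul_of_nonneg_right hκA hg]

lemma ratioBound_of_partial_removal [Fintype E] [Finite V] (hRP : IsRemovalPattern G w U p 𝒲)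
    (hi : 0 ≤ i) (hA : A ∈ G.parts (Ele w i \ U)) (hAW : (A, i) ∉ 𝒲) {m : ℕ}
    {Q : Fin m → Set V} (hQ : G.Enumerates (Ele w (i - 1) \ U) A Q)
    (hsort : ∀ j k : Fin m, j ≤ k → gfun G w U (i - 1) (Q k) * kappa G w c U (i - 1) (Q j)
      ≤ gfun G w U (i - 1) (Q j) * kappa G w c U (i - 1) (Q k))
    (σ : Fin m) (hin : ∀ k < σ, (Q k, i - 1) ∈ 𝒲) (hout : ∀ k, σ ≤ k → (Q k, i - 1) ∉ 𝒲)
    (hlow : ∀ x ∈ 𝒲, x.2 ≤ i - 2 → x.1 ⊆ Q σ) (IH : RatioBound G w c U 𝒲 (i - 1) (Q σ)) :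
    RatioBound G w c U 𝒲 i A := by
  set κ : Fin m → ℕ := fun k => kappa G w c U (i - 1) (Q k)
  set g : Fin m → ℕ := fun k => gfun G w U (i - 1) (Q k)
  have hK : kappaW G w c U 𝒲 i A = ∑ k ∈ Finset.Iio σ, κ k + kappaW G w c U 𝒲 (i - 1) (Q σ) :=
    hRP.finsum_members_eq_sum_Iio_add hA hAW hQ σ hin hout hlow _
  have hG : gW G w U 𝒲 i A = ∑ k ∈ Finset.Iio σ, g k + gW G w U 𝒲 (i - 1) (Q σ) :=
    hRP.finsum_members_eq_sum_Iio_add hA hAW hQ σ hin hout hlow _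
  have hκA : ∑ k ∈ Finset.Iio σ, κ k + κ σ + ∑ k ∈ Finset.Ioi σ, κ k ≤ kappa G w c U i A := by
    rw [add_assoc, ← Finset.sum_eq_sum_Iio_add_add_sum_Ioi]
    exact sum_kappa_le G w c U _ Q (fun _ => i - 1) (hQ.pairwise_disjoint.set_pairwise _)
      (fun k _ => hQ.subset k) (fun _ _ => by omega)
  have hgA : (gfun G w U i A : ℝ)
      = 2 ^ i + ↑(∑ k ∈ Finset.Iio σ, g k + (g σ + ∑ k ∈ Finset.Ioi σ, g k)) := by
    rw [← Finset.sum_eq_sum_Iio_add_add_sum_Ioi, Nat.cast_sum]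
    exact gfun_eq_two_zpow_add_sum G w U hi hA hQ
  have h₁₂ := Finset.sum_mul_sum_le_sum_mul_sum (Finset.Iio σ) {σ} κ g
    fun j hj k hk => hsort j k (by rw [Finset.mem_singleton.1 hk]; exact (Finset.mem_Iio.1 hj).le)
  have h₁₃ := Finset.sum_mul_sum_le_sum_mul_sum (Finset.Iio σ) (Finset.Ioi σ) κ g
    fun j hj k hk => hsort j k ((Finset.mem_Iio.1 hj).trans (Finset.mem_Ioi.1 hk)).le
  have h₂₃ := Finset.sum_mul_sum_le_sum_mul_sum {σ} (Finset.Ioi σ) κ g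
    fun j hj k hk => hsort j k (by rw [Finset.mem_singleton.1 hj]; exact (Finset.mem_Ioi.1 hk).le)
  rw [Finset.sum_singleton, Finset.sum_singleton] at h₁₂ h₂₃
  have hκ'₂ : kappaW G w c U 𝒲 (i - 1) (Q σ) ≤ κ σ := hRP.kappaW_le_kappa c (i - 1) (Q σ)
  replace IH : (kappaW G w c U 𝒲 (i - 1) (Q σ) : ℝ) * (g σ - (2 : ℝ) ^ (i - 1))
      ≤ (gW G w U 𝒲 (i - 1) (Q σ) + (2 : ℝ) ^ (i - 1)) * κ σ := IH
  have htwo : (2 : ℝ) ^ i = 2 * 2 ^ (i - 1) := by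
    rw [zpow_sub_one₀ two_ne_zero]
    ring
  rw [RatioBound, hK, hG, hgA, htwo]
  rify at hκA h₁₂ h₁₃ h₂₃ hκ'₂
  push_cast
  have hsum_nonneg (t : Finset (Fin m)) (f : Fin m → ℕ) : (0 : ℝ) ≤ ∑ k ∈ t, (f k : ℝ) :=
    Finset.sum_nonneg fun _ _ => Nat.cast_nonneg _
  refine Eq.trans_le ?_ (mediant_bound (hsum_nonneg _ _) (hsum_nonneg _ _) (Nat.cast_nonneg _)
    (hsum_nonneg _ _) (Nat.cast_nonneg _) (Nat.cast_nonneg _) (zpow_pos two_pos _).le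
    hκA h₁₂ h₁₃ h₂₃ hκ'₂ IH)
  ring

lemma IsEfficient.ratioBound_of_pred [Fintype E] [Finite V] (hEff : IsEfficient G w c U p 𝒲)
    (hRP : IsRemovalPattern G w U p 𝒲) (hi : 0 ≤ i) (hip : i ≤ p)
    (hA : A ∈ G.parts (Ele w i \ U))
    (IH : ∀ B ∈ G.parts (Ele w (i - 1) \ U), RatioBound G w c U 𝒲 (i - 1) B) :
    RatioBound G w c U 𝒲 i A := by
  by_cases hAW : (A, i) ∈ 𝒲
  · exact ratioBound_of_members_subset_singleton (hRP.members_subset_singleton_of_mem hAW)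
  obtain hbelow | ⟨-, m, Q, s, hQinj, hQ, hsort, hsm, hin, hout, hlow⟩ := hEff i hi hip A hA
  · exact ratioBound_of_members_subset_singleton (hRP.members_subset_singleton hA hbelow)
  replace hQ : G.Enumerates (Ele w (i - 1) \ U) A Q := ⟨hQinj, hQ⟩
  obtain hs | rfl := hsm.lt_or_eq
  · exact ratioBound_of_partial_removal hRP hi hA hAW hQ hsort ⟨s, hs⟩ hin hout
      (fun x hx hxi => (hlow x hx hxi).2) (IH _ (hQ.mem_parts _))
  · exact ratioBound_of_all_removed hRP hi hA hAW hQ (fun k => hin k k.2)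
      (fun x hx hxi => lt_irrefl _ (hlow x hx hxi).1)

theorem IsEfficient.ratioBound [Fintype E] [Finite V] (hEff : IsEfficient G w c U p 𝒲)
    (hRP : IsRemovalPattern G w U p 𝒲) (hi : -1 ≤ i) (hip : i ≤ p)
    (hA : A ∈ G.parts (Ele w i \ U)) : RatioBound G w c U 𝒲 i A := by
  induction i, hi using Int.leInduction generalizing A with
  | base =>
    exact ratioBound_of_members_subset_singleton (hRP.members_subset_singleton hA
      fun x hx hlt => absurd (hRP.levels x hx).1 (by omega))
  | succ n hn ih =>
    refine hEff.ratioBound_of_pred hRP (by omega) hip hA fun B hB => ?_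
    rw [add_sub_cancel_right] at hB ⊢
    exact ih (by omega) hB

end RatioBound

section Patterns

variable [Fintype V] [Fintype E]

theorem kappa_ratio_bound_general
    (G : Multigraph V E) (w : E → ℕ) (c : E → ℕ)
    (p : ℕ)
    (U : Set E)
    (𝒲 : Set (Set V × ℤ))
    (hRP : IsRemovalPattern G w U p 𝒲)
    (hEff : IsEfficient G w c U p 𝒲)
    (i : ℤ) (hil : -1 ≤ i) (hiu : i ≤ (p : ℤ))
    (A : Set V) (hA : A ∈ G.parts (Ele w i \ U))
    (hκ : 0 < kappa G w c U i A) :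
    (kappaW G w c U 𝒲 i A : ℝ) / (kappa G w c U i A : ℝ)
        * ((gfun G w U i A : ℝ) - (2 : ℝ) ^ i)
      ≤ (gW G w U 𝒲 i A : ℝ) + (2 : ℝ) ^ i := by
  rw [div_mul_eq_mul_div, div_le_iff₀ (by exact_mod_cast hκ)]
  exact hEff.ratioBound hRP hil hiu hA

/-- For an efficient removal pattern `𝒲`, every level
`i ∈ {−1,…,p}` and every `A ∈ 𝒜_i` with `κ_i(A) > 0`:
`(κ_i^𝒲(A)/κ_i(A))·(g_i(A) − 2^i) ≤ g_i^𝒲(A) + 2^i`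
(real arithmetic; for `i = −1`, `2^i` denotes `1/2`). -/
theorem kappa_ratio_bound
    (G : Multigraph V E) (w : E → ℕ) (c : E → ℕ) (hc : ∀ e, 0 < c e)
    (p : ℕ) (hp : 1 ≤ p)
    (hw : ∀ e, w e = 0 ∨ ∃ i ≤ p, w e = 2 ^ i)
    (hEp : G.Connects {e | w e = 2 ^ p})
    (U : Set E) (hU : U ⊆ Ele w ((p : ℤ) - 1))
    (𝒲 : Set (Set V × ℤ))
    (hRP : IsRemovalPattern G w U p 𝒲)
    (hEff : IsEfficient G w c U p 𝒲)
    (i : ℤ) (hil : -1 ≤ i) (hiu : i ≤ (p : ℤ))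
    (A : Set V) (hA : A ∈ G.parts (Ele w i \ U))
    (hκ : 0 < kappa G w c U i A) :
    (kappaW G w c U 𝒲 i A : ℝ) / (kappa G w c U i A : ℝ)
        * ((gfun G w U i A : ℝ) - (2 : ℝ) ^ i)
      ≤ (gW G w U 𝒲 i A : ℝ) + (2 : ℝ) ^ i :=
  kappa_ratio_bound_general G w c p U 𝒲 hRP hEff i hil hiu A hA hκ

end Patterns

end MSTInterdiction
end

section
/- Consider the multigraph G on vertex set {u,v,w} with eight edges: e₁ = {u,w} of weight 1, e₂ = {v,w} of weight 2, e₃ = {u,v} of weight 3, e₄ = {u,v} of weight 4, e₅ = {u,v} of weight 5, e₆ = {u,w} of weight 6, e₇ = {u,w} of weight 100, e₈ = {v,w} of weight 101. Then (a) the minimum spanning tree weight of G minus {e₁,e₂,e₆} equals 103, while (b) for every 3-element subset K of {e₁,e₂,e₃,e₄,e₅}, the minimum spanning tree weight of G minus K is at most 10. In particular, every optimal solution of the 3 most vital edges problem for this graph contains an edge outside {e₁,e₂,e₃,e₄,e₅}, where {e₁,e₂} is the unique minimum spanning tree T and {e₃,e₄,e₅} is the union over the tree edges of their 3 lightest replacement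 edges; this refutes Lemma 2 of Shen (1999), which claims the optimal solution is always contained in this union. -/
namespace MSTInterdiction

variable {V E : Type*}

/-- The counterexample multigraph on vertices `u = 0`, `v = 1`, `w = 2` with eight edges
`e₁,…,e₈` (indexed `0,…,7`):
`e₁={u,w}`, `e₂={v,w}`, `e₃=e₄=e₅={u,v}`, `e₆={u,w}`, `e₇={u,w}`, `e₈={v,w}`. -/
def shenGraph : Multigraph (Fin 3) (Fin 8) where
  fst := ![0, 1, 0, 0, 0, 0, 0, 1]
  snd := ![2, 2, 1, 1, 1, 2, 2, 2]
  loopless := by decide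

/-- The weights of the eight edges: `1, 2, 3, 4, 5, 6, 100, 101`. -/
def shenWeights : Fin 8 → ℕ := ![1, 2, 3, 4, 5, 6, 100, 101]

section Helpers

private lemma cut_lemma (G : Multigraph V E) {T : Set E} {x y : V}
    (h : Relation.EqvGen (G.rel T) x y) (A : Set V) (hx : x ∈ A) (hy : y ∉ A) :
    ∃ e ∈ T, ¬(G.fst e ∈ A ↔ G.snd e ∈ A) := by
  by_contra hc
  push_neg at hc
  have key : ∀ a b : V, Relation.EqvGen (G.rel T) a b → (a ∈ A ↔ b ∈ A) := by
    intro a b hab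
    induction hab with
    | rel a b hab =>
      obtain ⟨e, he, h1 | h2⟩ := hab
      · rw [← h1.1, ← h1.2]; exact hc e he
      · rw [← h2.1, ← h2.2]; exact (hc e he).symm
    | refl a => rfl
    | symm a b _ ih => exact ih.symm
    | trans a b c _ _ ih1 ih2 => exact ih1.trans ih2
  exact hy ((key x y h).mp hx)

private lemma two_le_setSum (w : Fin 8 → ℕ) {T : Set (Fin 8)} {a b : Fin 8}
    (ha : a ∈ T) (hb : b ∈ T) (hab : a ≠ b) : w a + w b ≤ setSum w T := by
  classical
  have hfin : T.Finite := Set.toFinite T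
  rw [setSum, finsum_mem_eq_finite_toFinset_sum _ hfin]
  have hsub : ({a, b} : Finset (Fin 8)) ⊆ hfin.toFinset := by
    intro x hx
    rw [Set.Finite.mem_toFinset]
    rcases Finset.mem_insert.mp hx with rfl | hx
    · exact ha
    · rw [Finset.mem_singleton] at hx; subst hx; exact hb
  calc w a + w b = ∑ x ∈ ({a, b} : Finset (Fin 8)), w x := (Finset.sum_pair hab).symm
    _ ≤ _ := Finset.sum_le_sum_of_subset hsub

private lemma shen_connects {T : Set (Fin 8)} {a b : Fin 8} (ha : a ∈ T) (hb : b ∈ T)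
    (hauv : a = 1 ∨ a = 2 ∨ a = 3 ∨ a = 4) (hbuw : b = 0 ∨ b = 5 ∨ b = 6) :
    shenGraph.Connects T := by
  have h02 : Relation.EqvGen (shenGraph.rel T) 0 2 := by
    apply Relation.EqvGen.rel
    rcases hbuw with rfl | rfl | rfl <;> exact ⟨_, hb, Or.inl ⟨rfl, rfl⟩⟩
  have h01 : Relation.EqvGen (shenGraph.rel T) 0 1 := by
    rcases hauv with rfl | rfl | rfl | rfl
    · -- edge 1 : {1, 2}
      have h12 : Relation.EqvGen (shenGraph.rel T) 1 2 :=
        Relation.EqvGen.rel _ _ ⟨_, ha, Or.inl ⟨rfl, rfl⟩⟩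
      exact h02.trans _ _ _ (h12.symm _ _)
    · exact Relation.EqvGen.rel _ _ ⟨_, ha, Or.inl ⟨rfl, rfl⟩⟩
    · exact Relation.EqvGen.rel _ _ ⟨_, ha, Or.inl ⟨rfl, rfl⟩⟩
    · exact Relation.EqvGen.rel _ _ ⟨_, ha, Or.inl ⟨rfl, rfl⟩⟩
  have key : ∀ x : Fin 3, Relation.EqvGen (shenGraph.rel T) 0 x := by
    intro x
    fin_cases x
    · exact Relation.EqvGen.refl 0
    · exact h01
    · exact h02
  intro x y
  exact ((key x).symm _ _).trans _ _ _ (key y)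

private lemma shen_val_le {K : Set (Fin 8)} {a b : Fin 8} (ha : a ∉ K) (hb : b ∉ K)
    (hab : a ≠ b)
    (hauv : a = 1 ∨ a = 2 ∨ a = 3 ∨ a = 4) (hbuw : b = 0 ∨ b = 5 ∨ b = 6) :
    shenGraph.val shenWeights K ≤ shenWeights a + shenWeights b := by
  apply Nat.sInf_le
  refine ⟨{a, b}, ?_, ?_, finsum_mem_pair hab⟩
  · intro x hx
    rcases hx with rfl | hx
    · exact ha
    · rw [Set.mem_singleton_iff] at hx; subst hx; exact hb
  · exact shen_connects (by simp) (by simp) hauv hbuw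

end Helpers

private lemma shen_crossing {T : Set (Fin 8)} (hT : T ⊆ ({0, 1, 5} : Set (Fin 8))ᶜ)
    (hconn : shenGraph.Connects T) :
    (∃ e ∈ T, e = 6 ∨ e = 7) ∧ (∃ e ∈ T, e = 2 ∨ e = 3 ∨ e = 4 ∨ e = 6) ∧
      (∃ e ∈ T, e = 2 ∨ e = 3 ∨ e = 4 ∨ e = 7) := by
  refine ⟨?_, ?_, ?_⟩
  · obtain ⟨e, he, hne⟩ := cut_lemma shenGraph (hconn 2 0) {2} (by simp) (by decide)
    refine ⟨e, he, ?_⟩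
    have hK : e ∉ ({0, 1, 5} : Set (Fin 8)) := hT he
    fin_cases e <;> first | decide | exact absurd (by decide) hK | exact absurd (by decide) hne
  · obtain ⟨e, he, hne⟩ := cut_lemma shenGraph (hconn 0 1) {0} (by simp) (by decide)
    refine ⟨e, he, ?_⟩
    have hK : e ∉ ({0, 1, 5} : Set (Fin 8)) := hT he
    fin_cases e <;> first | decide | exact absurd (by decide) hK | exact absurd (by decide) hne
  · obtain ⟨e, he, hne⟩ := cut_lemma shenGraph (hconn 1 0) {1} (by simp) (by decide)
    refine ⟨e, he, ?_⟩
    have hK : e ∉ ({0, 1, 5} : Set (Fin 8)) := hT he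
    fin_cases e <;> first | decide | exact absurd (by decide) hK | exact absurd (by decide) hne

private lemma shen_part_a : shenGraph.val shenWeights {0, 1, 5} = 103 := by
  apply le_antisymm
  · have := shen_val_le (K := {0, 1, 5}) (a := 2) (b := 6) (by decide) (by decide)
      (by decide) (by decide) (by decide)
    simpa [shenWeights] using this
  · apply le_csInf
    · refine ⟨shenWeights 2 + shenWeights 6, {2, 6}, ?_, ?_, finsum_mem_pair (by decide)⟩
      · intro x hx; rcases hx with rfl | hx
        · decide
        · rw [Set.mem_singleton_iff] at hx; subst hx; decide
      · exact shen_connects (T := {2, 6}) (a := 2) (b := 6) (by decide) (by decide)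
          (by decide) (by decide)
    · rintro n ⟨T, hT, hconn, rfl⟩
      obtain ⟨⟨ew, hew, hw⟩, ⟨eu, heu, hu⟩, ⟨ev, hev, hv⟩⟩ := shen_crossing hT hconn
      rcases hw with rfl | rfl
      · have hne : ev ≠ (6 : Fin 8) := by rcases hv with rfl | rfl | rfl | rfl <;> decide
        have := two_le_setSum shenWeights hev hew hne
        rcases hv with rfl | rfl | rfl | rfl <;> exact le_trans (by decide) this
      · have hne : eu ≠ (7 : Fin 8) := by rcases hu with rfl | rfl | rfl | rfl <;> decide
        have := two_le_setSum shenWeights heu hew hne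
        rcases hu with rfl | rfl | rfl | rfl <;> exact le_trans (by decide) this

private lemma shen_part_b (K : Set (Fin 8)) (hK : K ⊆ {0, 1, 2, 3, 4})
    (hcard : Nat.card K = 3) : shenGraph.val shenWeights K ≤ 10 := by
  have h5 : (5 : Fin 8) ∉ K := fun h => by have := hK h; revert this; decide
  by_cases h1 : (1 : Fin 8) ∈ K
  · by_cases h2 : (2 : Fin 8) ∈ K
    · by_cases h3 : (3 : Fin 8) ∈ K
      · -- K = {1, 2, 3}
        have hsub : ({1, 2, 3} : Set (Fin 8)) ⊆ K := by
          intro x hx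
          rcases hx with rfl | hx
          · exact h1
          · rcases hx with rfl | hx
            · exact h2
            · rw [Set.mem_singleton_iff] at hx; subst hx; exact h3
        have hn3 : ({1, 2, 3} : Set (Fin 8)).ncard = 3 := by
          rw [Set.ncard_insert_of_notMem (by decide),
            Set.ncard_insert_of_notMem (by decide), Set.ncard_singleton]
        have hKeq : ({1, 2, 3} : Set (Fin 8)) = K := by
          apply Set.eq_of_subset_of_ncard_le hsub
          rw [← Nat.card_coe_set_eq, hcard, hn3]
        have h0 : (0 : Fin 8) ∉ K := by rw [← hKeq]; decide
        have h4 : (4 : Fin 8) ∉ K := by rw [← hKeq]; decide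
        exact (shen_val_le h4 h0 (by decide) (by decide) (by decide)).trans (by decide)
      · exact (shen_val_le h3 h5 (by decide) (by decide) (by decide)).trans (by decide)
    · exact (shen_val_le h2 h5 (by decide) (by decide) (by decide)).trans (by decide)
  · exact (shen_val_le h1 h5 (by decide) (by decide) (by decide)).trans (by decide)

/-- In the counterexample graph: (a) removing `{e₁, e₂, e₆}` leaves a
graph with MST weight `103`; (b) removing any `3`-element subset of `{e₁,…,e₅}` leaves
MST weight at most `10`; hence (c) every optimal solution of the `3` most vital edges
problem contains an edge outside `{e₁,…,e₅}` (the union of the MST `{e₁,e₂}` with the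
`3` lightest replacement edges `{e₃,e₄,e₅}` of its edges), refuting Lemma 2 of
Shen (1999). -/
theorem shen_counterexample :
    shenGraph.val shenWeights {0, 1, 5} = 103 ∧
    (∀ K : Set (Fin 8), K ⊆ {0, 1, 2, 3, 4} → Nat.card K = 3 →
      shenGraph.val shenWeights K ≤ 10) ∧
    (∀ K : Set (Fin 8), Nat.card K = 3 →
      (∀ K' : Set (Fin 8), Nat.card K' = 3 →
        shenGraph.val shenWeights K' ≤ shenGraph.val shenWeights K) →
      ¬K ⊆ {0, 1, 2, 3, 4}) := by

  refine ⟨shen_part_a, shen_part_b, ?_⟩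
  intro K hcard hopt hsub
  have hKcard : Nat.card ({0, 1, 5} : Set (Fin 8)) = 3 := by
    rw [Nat.card_coe_set_eq, Set.ncard_insert_of_notMem (by decide),
      Set.ncard_insert_of_notMem (by decide), Set.ncard_singleton]
  have h1 := hopt {0, 1, 5} hKcard
  rw [shen_part_a] at h1
  have h2 := shen_part_b K hsub hcard
  omega


end MSTInterdiction
end
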